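/- arXiv:1509.03086 — 8 statements merged into one kernel-verified Lean document; each statement's English description precedes it below -/
import Mathlib

section
/- Suppose f : ℝ → ℝ satisfies (f1)–(f5) and let h = f⁻¹ be its inverse. Then for every ε ∈ (0, 1) there exists t₁ > 0 such that for all t ∈ (0, t₁] one has (t/(b₀(1+ε)))^{1/(q−1)} ≤ h(t) ≤ (t/(b₀(1−ε)))^{1/(q−1)}. -/
theorem stmt_2 (f h : ℝ → ℝ) (c₀ p b₀ q : ℝ)
    (hf1 : ContDiff ℝ 1 f) (hf01 : f 0 = 0) (hf02 : deriv f 0 = 0)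
    (hf2 : ∀ t : ℝ, f (-t) = - f t)
    (hc₀ : 0 < c₀) (hp : 2 < p)
    (hf3 : Filter.Tendsto (fun t : ℝ => f t / t ^ (p - 1)) Filter.atTop (nhds c₀))
    (hb₀ : 0 < b₀) (hq2 : 2 < q) (hqp : q ≤ p)
    (hf4 : Filter.Tendsto (fun t : ℝ => f t / t ^ (q - 1))
      (nhdsWithin 0 (Set.Ioi 0)) (nhds b₀))
    (hf5 : StrictMonoOn (fun t : ℝ => f t / t) (Set.Ioi 0))
    (hhf : Function.LeftInverse h f) (hfh : Function.RightInverse h f) :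
    ∀ ε : ℝ, 0 < ε → ε < 1 →
      ∃ t₁ : ℝ, 0 < t₁ ∧ ∀ t : ℝ, 0 < t → t ≤ t₁ →
        (t / (b₀ * (1 + ε))) ^ (1 / (q - 1)) ≤ h t ∧
          h t ≤ (t / (b₀ * (1 - ε))) ^ (1 / (q - 1)) := by
  intro ε hε0 hε1
  have hq1 : (0:ℝ) < q - 1 := by linarith
  -- positivity of f on (0,∞)
  have hev : ∀ᶠ u in nhdsWithin 0 (Set.Ioi 0), 0 < f u := by
    filter_upwards [hf4.eventually (eventually_gt_nhds hb₀), self_mem_nhdsWithin]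
      with u hu hu0
    have hpow : (0:ℝ) < u ^ (q - 1) := Real.rpow_pos_of_pos hu0 _
    have := mul_pos hu hpow
    rwa [div_mul_cancel₀ _ (ne_of_gt hpow)] at this
  obtain ⟨δ₀, hδ₀, hsub₀⟩ := mem_nhdsGT_iff_exists_Ioc_subset.mp hev
  have hδ₀0 : (0:ℝ) < δ₀ := hδ₀
  have hfpos : ∀ s : ℝ, 0 < s → 0 < f s := by
    intro s hs
    rcases le_or_gt s δ₀ with hle | hlt
    · exact hsub₀ ⟨hs, hle⟩
    · have h1 : 0 < f δ₀ := hsub₀ ⟨hδ₀0, le_refl _⟩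
      have h2 : f δ₀ / δ₀ < f s / s := hf5 hδ₀0 hs hlt
      have h3 : 0 < f δ₀ / δ₀ := div_pos h1 hδ₀0
      have h4 : 0 < f s / s := lt_trans h3 h2
      have := mul_pos h4 hs
      rwa [div_mul_cancel₀ _ (ne_of_gt hs)] at this
  have hmono : StrictMonoOn f (Set.Ioi 0) := by
    intro a ha b hb hab
    have h1 : f a / a < f b / b := hf5 ha hb hab
    have h3 : 0 ≤ f b / b := (div_pos (hfpos b hb) hb).le
    have h4 : f a / a * a < f b / b * b :=
      mul_lt_mul h1 hab.le ha h3
    rwa [div_mul_cancel₀ _ (ne_of_gt ha), div_mul_cancel₀ _ (ne_of_gt (lt_trans ha hab))] at h4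
  -- choose δ for ε
  have hmem : Set.Ioo (b₀ * (1 - ε)) (b₀ * (1 + ε)) ∈ nhds b₀ :=
    Ioo_mem_nhds (by nlinarith) (by nlinarith)
  obtain ⟨δ, hδ, hsub⟩ := mem_nhdsGT_iff_exists_Ioc_subset.mp (hf4.eventually hmem)
  have hδ0 : (0:ℝ) < δ := hδ
  refine ⟨f δ, hfpos δ hδ0, ?_⟩
  intro t ht0 ht1
  set s := h t with hs
  have hfs : f s = t := hfh t
  -- s > 0
  have hs0 : 0 < s := by
    rcases lt_trichotomy s 0 with hneg | hzero | hposs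
    · have : f (-(-s)) = - f (-s) := hf2 (-s)
      rw [neg_neg] at this
      have hfn : 0 < f (-s) := hfpos (-s) (by linarith)
      rw [hfs] at this
      linarith
    · rw [hzero, hf01] at hfs; linarith
    · exact hposs
  -- s ≤ δ
  have hsδ : s ≤ δ := by
    by_contra hc
    push_neg at hc
    have := hmono (Set.mem_Ioi.mpr hδ0) (Set.mem_Ioi.mpr hs0) hc
    rw [hfs] at this
    linarith
  have hb := hsub ⟨hs0, hsδ⟩
  simp only [Set.mem_setOf_eq] at hb
  rw [hfs] at hb
  obtain ⟨hb1, hb2⟩ := hb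
  have hpow : (0:ℝ) < s ^ (q - 1) := Real.rpow_pos_of_pos hs0 _
  have hB1 : (0:ℝ) < b₀ * (1 + ε) := by nlinarith
  have hB2 : (0:ℝ) < b₀ * (1 - ε) := by nlinarith
  have key : (s ^ (q - 1)) ^ (1 / (q - 1)) = s := by
    rw [← Real.rpow_mul hs0.le, mul_one_div_cancel (ne_of_gt hq1), Real.rpow_one]
  constructor
  · -- lower bound
    have h1 : t / (b₀ * (1 + ε)) ≤ s ^ (q - 1) := by
      rw [div_le_iff₀ hB1]
      have : t < b₀ * (1 + ε) * s ^ (q - 1) := by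
        have := (div_lt_iff₀ hpow).mp hb2
        linarith
      linarith
    calc (t / (b₀ * (1 + ε))) ^ (1 / (q - 1))
        ≤ (s ^ (q - 1)) ^ (1 / (q - 1)) :=
          Real.rpow_le_rpow (by positivity) h1 (by positivity)
      _ = s := key
  · -- upper bound
    have h1 : s ^ (q - 1) ≤ t / (b₀ * (1 - ε)) := by
      rw [le_div_iff₀ hB2]
      have := (lt_div_iff₀ hpow).mp hb1
      linarith
    calc s = (s ^ (q - 1)) ^ (1 / (q - 1)) := key.symm
      _ ≤ (t / (b₀ * (1 - ε))) ^ (1 / (q - 1)) :=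
          Real.rpow_le_rpow hpow.le h1 (by positivity)
end

section
/- Suppose f : ℝ → ℝ satisfies (f1)–(f5), let h = f⁻¹ and H(t) = ∫₀ᵗ h(s) ds. Then there exist constants C > 0 and t₀ > 0 such that H(t) − (1/2) h(t) t ≥ C t^{p/(p−1)} for all t ≥ t₀. -/
/-!
Since `f t / t` increases, `h s / s` decreases on `(0, ∞)`. Bounding `h` from below on `[0, t/2]`
and on `[t/2, t]` by the lines through the origin and `(t/2, h (t/2))`, resp. `(t, h t)`, gives
`H t - h t * t / 2 ≥ t / 8 * (2 * h (t/2) - h t)`. Inverting the asymptotics of `f` gives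
`h t ~ (t / c₀) ^ r` with `r = 1 / (p - 1) < 1`, so
`2 * h (t/2) - h t ~ (2 ^ (1 - r) - 1) * (t / c₀) ^ r` has a positive constant,
and `t * t ^ r = t ^ (p / (p - 1))`.
-/

open Filter Set Topology MeasureTheory

lemma eventually_pos_of_tendsto_div_rpow {f : ℝ → ℝ} {q b : ℝ} (hb : 0 < b)
    (hf : Tendsto (fun t => f t / t ^ q) (𝓝[>] 0) (𝓝 b)) :
    ∀ᶠ t in 𝓝[>] 0, 0 < f t := by
  filter_upwards [hf.eventually (lt_mem_nhds hb), self_mem_nhdsWithin] with t hft ht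
  exact (div_pos_iff_of_pos_right (Real.rpow_pos_of_pos ht _)).mp hft

lemma pos_of_monotoneOn_div {f : ℝ → ℝ} (hf : MonotoneOn (fun t => f t / t) (Ioi 0))
    (hf0 : ∀ᶠ t in 𝓝[>] 0, 0 < f t) {t : ℝ} (ht : 0 < t) : 0 < f t := by
  obtain ⟨s, hs, hst⟩ := (hf0.and (Ioo_mem_nhdsGT ht)).exists
  have : f s / s ≤ f t / t := hf hst.1 ht hst.2.le
  exact (div_pos_iff_of_pos_right ht).mp ((div_pos hs hst.1).trans_le this)

lemma strictMonoOn_Ici_of_monotoneOn_div {f : ℝ → ℝ}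
    (hf : MonotoneOn (fun t => f t / t) (Ioi 0)) (hf0 : f 0 = 0)
    (hpos : ∀ t, 0 < t → 0 < f t) : StrictMonoOn f (Ici 0) := by
  intro u hu v hv huv
  obtain hu | hu := (mem_Ici.mp hu).eq_or_lt
  · rw [← hu, hf0]
    exact hpos v (hu ▸ huv)
  have hv : 0 < v := hu.trans huv
  calc f u = u * (f u / u) := by field_simp
    _ < v * (f u / u) := mul_lt_mul_of_pos_right huv (div_pos (hpos u hu) hu)
    _ ≤ v * (f v / v) := mul_le_mul_of_nonneg_left (hf hu hv huv.le) hv.le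
    _ = f v := by field_simp

lemma antitoneOn_div_of_rightInverse {f h : ℝ → ℝ}
    (hf : MonotoneOn (fun t => f t / t) (Ioi 0)) (hh : Monotone h)
    (hpos : ∀ t, 0 < t → 0 < h t) (hfh : Function.RightInverse h f) :
    AntitoneOn (fun t => h t / t) (Ioi 0) := by
  intro s hs t ht hst
  have hs' := hpos s hs
  have ht' := hpos t ht
  have : s / h s ≤ t / h t := by
    simpa only [hfh s, hfh t] using hf hs' ht' (hh hst)
  show h t / t ≤ h s / s
  rw [← inv_div t, ← inv_div s]
  exact inv_anti₀ (div_pos hs hs') this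

lemma mul_le_integral_of_antitoneOn_div {g : ℝ → ℝ} {a b : ℝ} (ha : 0 ≤ a) (hab : a ≤ b)
    (hg : AntitoneOn (fun s => g s / s) (Ioi 0)) (hint : IntervalIntegrable g volume a b) :
    g b / b * ((b ^ 2 - a ^ 2) / 2) ≤ ∫ s in a..b, g s := by
  have hlin : (∫ s in a..b, g b / b * s) = g b / b * ((b ^ 2 - a ^ 2) / 2) := by
    rw [intervalIntegral.integral_const_mul, integral_id]
  rw [← hlin]
  refine intervalIntegral.integral_mono_on_of_le_Ioo hab
    ((continuous_const_mul _).intervalIntegrable _ _) hint fun x hx => ?_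
  have hx0 : 0 < x := ha.trans_lt hx.1
  have : g b / b ≤ g x / x := hg hx0 (hx0.trans hx.2) hx.2.le
  rwa [le_div_iff₀ hx0] at this

lemma le_integral_sub_half_mul_of_antitoneOn_div {g : ℝ → ℝ}
    (hg : AntitoneOn (fun s => g s / s) (Ioi 0)) {t : ℝ} (ht : 0 < t)
    (hint : IntervalIntegrable g volume 0 t) :
    t / 8 * (2 * g (t / 2) - g t) ≤ (∫ s in (0:ℝ)..t, g s) - 1 / 2 * g t * t := by
  have hmid : t / 2 ∈ uIcc 0 t := by rw [uIcc_of_le ht.le]; constructor <;> linarith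
  have hint₁ := hint.mono_set (uIcc_subset_uIcc_left hmid)
  have hint₂ := hint.mono_set (uIcc_subset_uIcc_right hmid)
  have h₁ := mul_le_integral_of_antitoneOn_div le_rfl (by positivity) hg hint₁
  have h₂ := mul_le_integral_of_antitoneOn_div (by positivity) (by linarith) hg hint₂
  rw [show g (t / 2) / (t / 2) * (((t / 2) ^ 2 - 0 ^ 2) / 2) = t / 4 * g (t / 2) by
    field_simp; ring] at h₁
  rw [show g t / t * ((t ^ 2 - (t / 2) ^ 2) / 2) = 3 / 8 * t * g t by field_simp; ring] at h₂
  rw [← intervalIntegral.integral_add_adjacent_intervals hint₁ hint₂]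
  linarith

lemma tendsto_div_rpow_inv_of_rightInverse {f h : ℝ → ℝ} {c α : ℝ} (hc : 0 < c)
    (hα : α ≠ 0)
    (hf : Tendsto (fun x => f x / x ^ α) atTop (𝓝 c)) (hh : Tendsto h atTop atTop)
    (hfh : Function.RightInverse h f) :
    Tendsto (fun t => h t / t ^ α⁻¹) atTop (𝓝 (c ^ (-α⁻¹))) := by
  refine ((hf.comp hh).rpow_const (Or.inl hc.ne')).congr' ?_
  filter_upwards [hh.eventually_gt_atTop 0, eventually_gt_atTop 0] with t hht ht
  simp only [Function.comp_apply, hfh t]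
  rw [Real.div_rpow ht.le (by positivity), Real.rpow_neg ht.le, Real.rpow_neg (by positivity),
    Real.rpow_rpow_inv hht.le hα]
  field_simp

lemma tendsto_two_mul_half_sub_div_rpow {g : ℝ → ℝ} {r L : ℝ}
    (hg : Tendsto (fun t => g t / t ^ r) atTop (𝓝 L)) :
    Tendsto (fun t => (2 * g (t / 2) - g t) / t ^ r) atTop (𝓝 ((2 ^ (1 - r) - 1) * L)) := by
  have hhalf : Tendsto (fun t => g (t / 2) / (t / 2) ^ r) atTop (𝓝 L) :=
    hg.comp (tendsto_id.atTop_div_const two_pos)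
  have hlim : Tendsto (fun t => 2 ^ (1 - r) * (g (t / 2) / (t / 2) ^ r) - g t / t ^ r) atTop
      (𝓝 ((2 ^ (1 - r) - 1) * L)) := by
    convert (hhalf.const_mul (2 ^ (1 - r))).sub hg using 2
    ring
  refine hlim.congr' ?_
  filter_upwards [eventually_gt_atTop 0] with t ht
  rw [Real.div_rpow ht.le zero_le_two, Real.rpow_sub two_pos, Real.rpow_one]
  have : (0:ℝ) < 2 ^ r := by positivity
  have : (0:ℝ) < t ^ r := by positivity
  field_simp

theorem stmt_3_general (f h : ℝ → ℝ) (c₀ p b₀ q : ℝ)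
    (hf01 : f 0 = 0)
    (hf2 : ∀ t : ℝ, f (-t) = - f t)
    (hc₀ : 0 < c₀) (hp : 2 < p)
    (hf3 : Filter.Tendsto (fun t : ℝ => f t / t ^ (p - 1)) Filter.atTop (nhds c₀))
    (hb₀ : 0 < b₀)
    (hf4 : Filter.Tendsto (fun t : ℝ => f t / t ^ (q - 1))
      (nhdsWithin 0 (Set.Ioi 0)) (nhds b₀))
    (hf5 : StrictMonoOn (fun t : ℝ => f t / t) (Set.Ioi 0))
    (hfh : Function.RightInverse h f) :
    ∃ C : ℝ, 0 < C ∧ ∃ t₀ : ℝ, 0 < t₀ ∧ ∀ t : ℝ, t₀ ≤ t →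
      C * t ^ (p / (p - 1)) ≤ (∫ s in (0:ℝ)..t, h s) - (1 / 2) * h t * t := by
  have hfpos : ∀ t, 0 < t → 0 < f t := fun t ht =>
    pos_of_monotoneOn_div hf5.monotoneOn (eventually_pos_of_tendsto_div_rpow hb₀ hf4) ht
  have hfmono : StrictMono f := strictMono_of_odd_strictMonoOn_nonneg hf2
    (strictMonoOn_Ici_of_monotoneOn_div hf5.monotoneOn hf01 hfpos)
  let e := hfmono.orderIsoOfRightInverse f h hfh
  have hhmono : StrictMono h := e.symm.strictMono
  have hhtop : Tendsto h atTop atTop := e.symm.tendsto_atTop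
  have hh0 : h 0 = 0 := hfmono.injective (by rw [hfh, hf01])
  have hhpos : ∀ t, 0 < t → 0 < h t := fun t ht => hh0 ▸ hhmono ht
  have hhdiv := antitoneOn_div_of_rightInverse hf5.monotoneOn hhmono.monotone hhpos hfh
  have hexp : p / (p - 1) = 1 + (p - 1)⁻¹ := by
    field_simp [show p - 1 ≠ 0 by linarith]
    ring
  set r := (p - 1)⁻¹
  set L := (2 ^ (1 - r) - 1) * c₀ ^ (-r)
  have hL : 0 < L := by
    have hr : r < 1 := inv_lt_one_of_one_lt₀ (by linarith)
    have : 1 < (2:ℝ) ^ (1 - r) := Real.one_lt_rpow one_lt_two (by linarith)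
    have : 0 < c₀ ^ (-r) := by positivity
    positivity
  have hlim := tendsto_two_mul_half_sub_div_rpow
    (tendsto_div_rpow_inv_of_rightInverse hc₀ (by linarith) hf3 hhtop hfh)
  obtain ⟨t₀, ht₀⟩ := eventually_atTop.mp (hlim.eventually (lt_mem_nhds (half_lt_self hL)))
  refine ⟨L / 16, by positivity, max t₀ 1, by positivity, fun t ht => ?_⟩
  have ht0 : 0 < t := zero_lt_one.trans_le (le_of_max_le_right ht)
  have hgap := (lt_div_iff₀ (by positivity)).mp (ht₀ t (le_of_max_le_left ht))
  calc L / 16 * t ^ (p / (p - 1)) = t / 8 * (L / 2 * t ^ r) := by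
        rw [hexp, Real.rpow_add ht0, Real.rpow_one]; ring
    _ ≤ t / 8 * (2 * h (t / 2) - h t) := by gcongr
    _ ≤ _ :=
      le_integral_sub_half_mul_of_antitoneOn_div hhdiv ht0 hhmono.monotone.intervalIntegrable

theorem stmt_3 (f h : ℝ → ℝ) (c₀ p b₀ q : ℝ)
    (hf1 : ContDiff ℝ 1 f) (hf01 : f 0 = 0) (hf02 : deriv f 0 = 0)
    (hf2 : ∀ t : ℝ, f (-t) = - f t)
    (hc₀ : 0 < c₀) (hp : 2 < p)
    (hf3 : Filter.Tendsto (fun t : ℝ => f t / t ^ (p - 1)) Filter.atTop (nhds c₀))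
    (hb₀ : 0 < b₀) (hq2 : 2 < q) (hqp : q ≤ p)
    (hf4 : Filter.Tendsto (fun t : ℝ => f t / t ^ (q - 1))
      (nhdsWithin 0 (Set.Ioi 0)) (nhds b₀))
    (hf5 : StrictMonoOn (fun t : ℝ => f t / t) (Set.Ioi 0))
    (hhf : Function.LeftInverse h f) (hfh : Function.RightInverse h f) :
    ∃ C : ℝ, 0 < C ∧ ∃ t₀ : ℝ, 0 < t₀ ∧ ∀ t : ℝ, t₀ ≤ t →
      C * t ^ (p / (p - 1)) ≤ (∫ s in (0:ℝ)..t, h s) - (1 / 2) * h t * t :=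
  stmt_3_general f h c₀ p b₀ q hf01 hf2 hc₀ hp hf3 hb₀ hf4 hf5 hfh
end

section
/- Suppose f : ℝ → ℝ satisfies (f1)–(f5), let h = f⁻¹ and H(t) = ∫₀ᵗ h(s) ds. Then there exist constants c₂ > 0 and δ' > 0 such that H(t) ≥ c₂ t^{q/(q−1)} for all t ∈ [0, δ') and H(t) ≥ c₂ t^{p/(p−1)} for all t ≥ δ'. -/
/-!
Since `f` is continuous, injective and positive just to the right of `0`, it is strictly increasing,
so `h` is monotone. In each regime `u → 0⁺` and `u → ∞`, the limit of `f u / u ^ (r - 1)`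
(with `r = q`, resp. `r = p`) gives `f u ≤ C u ^ (r - 1)`, which inverts to
`h s ≥ (s / C) ^ (1 / (r - 1))`; then `H t = ∫₀ᵗ h ≥ (t / 2) h (t / 2) ≳ t ^ (r / (r - 1))`.
Both regimes are one argument, run along the filters `𝓝[>] 0` and `atTop`. The bounded range
between them is covered because `H` is nondecreasing and positive there.
-/

open Filter Set Topology

lemma StrictMono.of_continuous_of_injective {f : ℝ → ℝ} (hf : Continuous f)
    (hinj : Function.Injective f) {a b : ℝ} (hab : a < b) (hfab : f a < f b) : StrictMono f :=
  (hf.strictMono_of_inj hinj).resolve_right fun hanti => (hanti hab).asymm hfab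

lemma exists_pos_eventually_le_mul_rpow {l : Filter ℝ} {f : ℝ → ℝ} {r c : ℝ}
    (hf : Tendsto (fun t => f t / t ^ r) l (𝓝 c)) (hl : ∀ᶠ t in l, 0 < t) :
    ∃ C > 0, ∀ᶠ t in l, f t ≤ C * t ^ r := by
  refine ⟨|c| + 1, by positivity, ?_⟩
  have hc : c < |c| + 1 := by linarith [le_abs_self c]
  filter_upwards [hf.eventually_lt_const hc, hl] with t hft ht
  exact (div_le_iff₀ (by positivity)).1 hft.le

lemma tendsto_div_rpow_atTop {C κ : ℝ} (hC : 0 < C) (hκ : 0 < κ) :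
    Tendsto (fun s : ℝ => (s / C) ^ κ) atTop atTop :=
  (tendsto_rpow_atTop hκ).comp (tendsto_id.atTop_div_const hC)

lemma tendsto_div_rpow_nhdsGT_zero {C κ : ℝ} (hC : 0 < C) (hκ : 0 < κ) :
    Tendsto (fun s : ℝ => (s / C) ^ κ) (𝓝[>] 0) (𝓝[>] 0) := by
  refine tendsto_nhdsWithin_iff.2 ⟨tendsto_nhdsWithin_of_tendsto_nhds ?_, ?_⟩
  · have hcont : Continuous fun s : ℝ => (s / C) ^ κ :=
      (continuous_id.div_const C).rpow_const fun _ => Or.inr hκ.le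
    simpa [Real.zero_rpow hκ.ne'] using hcont.tendsto 0
  · filter_upwards [self_mem_nhdsWithin] with s (hs : 0 < s)
    exact Real.rpow_pos_of_pos (div_pos hs hC) κ

section Inverse

variable {f h : ℝ → ℝ}

lemma eventually_div_rpow_inv_le_of_le_mul_rpow {l : Filter ℝ} {C r : ℝ}
    (hh : Monotone h) (hhf : Function.LeftInverse h f) (hC : 0 < C) (hr : r ≠ 0)
    (hl : ∀ᶠ s in l, 0 ≤ s) (hlim : Tendsto (fun s => (s / C) ^ r⁻¹) l l)
    (hf : ∀ᶠ u in l, f u ≤ C * u ^ r) :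
    ∀ᶠ s in l, (s / C) ^ r⁻¹ ≤ h s := by
  filter_upwards [hlim.eventually hf, hl] with s hfs hs
  have hCs : C * ((s / C) ^ r⁻¹) ^ r = s := by
    rw [Real.rpow_inv_rpow (by positivity) hr]
    field_simp
  rw [← hhf ((s / C) ^ r⁻¹)]
  exact hh (hfs.trans_eq hCs)

lemma half_mul_le_integral (hh : Monotone h) (h0 : 0 ≤ h 0) {t : ℝ} (ht : 0 ≤ t) :
    t / 2 * h (t / 2) ≤ ∫ s in (0 : ℝ)..t, h s := by
  have hint : ∀ a b : ℝ, IntervalIntegrable h MeasureTheory.volume a b :=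
    fun _ _ => hh.intervalIntegrable
  rw [← intervalIntegral.integral_add_adjacent_intervals (hint 0 (t / 2)) (hint (t / 2) t)]
  have hleft : 0 ≤ ∫ s in (0 : ℝ)..t / 2, h s :=
    intervalIntegral.integral_nonneg (by linarith) fun u hu => h0.trans (hh hu.1)
  have hright : ∫ _ in (t / 2)..t, h (t / 2) ≤ ∫ s in (t / 2)..t, h s :=
    intervalIntegral.integral_mono_on (by linarith) intervalIntegrable_const (hint _ _)
      fun u hu => hh hu.1
  rw [intervalIntegral.integral_const, smul_eq_mul] at hright
  linarith

lemma mul_rpow_le_integral_of_le_half (hh : Monotone h) (h0 : 0 ≤ h 0) {a κ t : ℝ}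
    (ht : 0 < t) (hbound : a * (t / 2) ^ κ ≤ h (t / 2)) :
    a / 2 ^ (κ + 1) * t ^ (κ + 1) ≤ ∫ s in (0 : ℝ)..t, h s := calc
  a / 2 ^ (κ + 1) * t ^ (κ + 1) = t / 2 * (a * (t / 2) ^ κ) := by
    rw [Real.rpow_add_one (by positivity), Real.rpow_add_one (by positivity),
      Real.div_rpow ht.le zero_le_two]
    field_simp
  _ ≤ t / 2 * h (t / 2) := by gcongr
  _ ≤ ∫ s in (0 : ℝ)..t, h s := half_mul_le_integral hh h0 ht.le

lemma monotoneOn_integral_Ici_zero (hh : Monotone h) (h0 : 0 ≤ h 0) :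
    MonotoneOn (fun t => ∫ s in (0 : ℝ)..t, h s) (Ici 0) := fun _ ha _ _ hab =>
  intervalIntegral.integral_mono_interval le_rfl ha hab
    ((MeasureTheory.ae_restrict_mem measurableSet_Ioc).mono fun _ hs => h0.trans (hh hs.1.le))
    hh.intervalIntegrable

theorem exists_eventually_mul_rpow_le_integral_of_tendsto {l : Filter ℝ} {r c : ℝ}
    (hl_pos : ∀ᶠ t in l, 0 < t)
    (hl : ∀ C κ : ℝ, 0 < C → 0 < κ → Tendsto (fun s => (s / C) ^ κ) l l)
    (hh : Monotone h) (h0 : 0 ≤ h 0) (hhf : Function.LeftInverse h f) (hr : 1 < r)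
    (hf : Tendsto (fun t => f t / t ^ (r - 1)) l (𝓝 c)) :
    ∃ c' > 0, ∀ᶠ t in l, c' * t ^ (r / (r - 1)) ≤ ∫ s in (0 : ℝ)..t, h s := by
  have hr1 : 0 < r - 1 := by linarith
  obtain ⟨C, hC, hfC⟩ := exists_pos_eventually_le_mul_rpow hf hl_pos
  have hhC : ∀ᶠ s in l, (C ^ (r - 1)⁻¹)⁻¹ * s ^ (r - 1)⁻¹ ≤ h s := by
    filter_upwards [eventually_div_rpow_inv_le_of_le_mul_rpow hh hhf hC hr1.ne'
      (hl_pos.mono fun _ => le_of_lt) (hl C _ hC (inv_pos.2 hr1)) hfC, hl_pos] with s hs hs0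
    rwa [Real.div_rpow hs0.le hC.le, div_eq_inv_mul] at hs
  have hexp : (r - 1)⁻¹ + 1 = r / (r - 1) := by
    field_simp
    ring
  refine ⟨(C ^ (r - 1)⁻¹)⁻¹ / 2 ^ ((r - 1)⁻¹ + 1), by positivity, ?_⟩
  have hhalf : Tendsto (· / 2) l l := by simpa using hl 2 1 two_pos one_pos
  filter_upwards [hhalf.eventually hhC, hl_pos] with t ht ht0
  rw [← hexp]
  exact mul_rpow_le_integral_of_le_half hh h0 ht0 ht

end Inverse

lemma exists_mul_rpow_le_of_monotoneOn {H : ℝ → ℝ} {δ r c : ℝ} (hδ : 0 < δ)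
    (hH : MonotoneOn H (Ici δ)) (hHδ : 0 < H δ) (hr : 0 ≤ r) (hc : 0 < c)
    (hT : ∀ᶠ t in atTop, c * t ^ r ≤ H t) :
    ∃ c' > 0, ∀ t ≥ δ, c' * t ^ r ≤ H t := by
  obtain ⟨T, hT⟩ := eventually_atTop.1 hT
  have hT' : 0 < max T δ := lt_max_of_lt_right hδ
  refine ⟨min c (H δ / max T δ ^ r), by positivity, fun t ht => ?_⟩
  have ht0 : 0 ≤ t := hδ.le.trans ht
  rcases le_or_gt T t with hTt | htT
  · exact (mul_le_mul_of_nonneg_right (min_le_left _ _) (by positivity)).trans (hT t hTt)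
  · calc min c (H δ / max T δ ^ r) * t ^ r ≤ H δ / max T δ ^ r * max T δ ^ r := by
          gcongr
          · exact min_le_right _ _
          · exact htT.le.trans (le_max_left _ _)
      _ = H δ := div_mul_cancel₀ _ (by positivity)
      _ ≤ H t := hH (mem_Ici.2 le_rfl) ht ht

theorem stmt_5_general (f h : ℝ → ℝ) (c₀ p b₀ q : ℝ)
    (hf1 : ContDiff ℝ 1 f) (hf01 : f 0 = 0)
    (hp : 2 < p)
    (hf3 : Filter.Tendsto (fun t : ℝ => f t / t ^ (p - 1)) Filter.atTop (nhds c₀))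
    (hb₀ : 0 < b₀) (hq2 : 2 < q)
    (hf4 : Filter.Tendsto (fun t : ℝ => f t / t ^ (q - 1))
      (nhdsWithin 0 (Set.Ioi 0)) (nhds b₀))
    (hhf : Function.LeftInverse h f) (hfh : Function.RightInverse h f) :
    ∃ c₂ δ' : ℝ, 0 < c₂ ∧ 0 < δ' ∧
      (∀ t : ℝ, 0 ≤ t → t < δ' → c₂ * t ^ (q / (q - 1)) ≤ ∫ s in (0:ℝ)..t, h s) ∧
      (∀ t : ℝ, δ' ≤ t → c₂ * t ^ (p / (p - 1)) ≤ ∫ s in (0:ℝ)..t, h s) := by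
  have hfmono : StrictMono f := by
    obtain ⟨t, ht : 0 < t, hft⟩ :=
      (eventually_mem_nhdsWithin.and (hf4.eventually_const_lt hb₀)).exists
    refine StrictMono.of_continuous_of_injective hf1.continuous hhf.injective ht ?_
    rw [hf01]
    exact (div_pos_iff_of_pos_right (by positivity)).1 hft
  have hh : Monotone h := fun u v huv => hfmono.le_iff_le.1 (by rwa [hfh u, hfh v])
  have h0 : 0 ≤ h 0 := ((congrArg h hf01.symm).trans (hhf 0)).ge
  obtain ⟨cq, hcq, hnear⟩ := exists_eventually_mul_rpow_le_integral_of_tendsto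
    eventually_mem_nhdsWithin (fun _ _ => tendsto_div_rpow_nhdsGT_zero) hh h0 hhf
    (by linarith) hf4
  obtain ⟨cp, hcp, hfar⟩ := exists_eventually_mul_rpow_le_integral_of_tendsto
    (eventually_gt_atTop 0) (fun _ _ => tendsto_div_rpow_atTop) hh h0 hhf
    (by linarith) hf3
  obtain ⟨ε, hε : 0 < ε, hnear⟩ := mem_nhdsGT_iff_exists_Ioo_subset.1 hnear
  have hδ : ε / 2 ∈ Ioo 0 ε := ⟨by linarith, by linarith⟩
  obtain ⟨c', hc', hmid⟩ := exists_mul_rpow_le_of_monotoneOn hδ.1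
    ((monotoneOn_integral_Ici_zero hh h0).mono (Ici_subset_Ici.2 hδ.1.le))
    ((by positivity : 0 < cq * (ε / 2) ^ (q / (q - 1))).trans_le (hnear hδ))
    (div_pos (by linarith) (by linarith)).le hcp hfar
  refine ⟨min cq c', ε / 2, lt_min hcq hc', hδ.1, fun t ht0 htδ => ?_, fun t ht => ?_⟩
  · rcases ht0.eq_or_lt with rfl | ht
    · have hexp : q / (q - 1) ≠ 0 := (div_pos (by linarith) (by linarith)).ne'
      rw [Real.zero_rpow hexp, mul_zero, intervalIntegral.integral_same]
    · exact (mul_le_mul_of_nonneg_right (min_le_left _ _) (by positivity)).trans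
        (hnear ⟨ht, htδ.trans hδ.2⟩)
  · have ht0 : 0 ≤ t := hδ.1.le.trans ht
    exact (mul_le_mul_of_nonneg_right (min_le_right _ _) (by positivity)).trans (hmid t ht)

theorem stmt_5 (f h : ℝ → ℝ) (c₀ p b₀ q : ℝ)
    (hf1 : ContDiff ℝ 1 f) (hf01 : f 0 = 0) (hf02 : deriv f 0 = 0)
    (hf2 : ∀ t : ℝ, f (-t) = - f t)
    (hc₀ : 0 < c₀) (hp : 2 < p)
    (hf3 : Filter.Tendsto (fun t : ℝ => f t / t ^ (p - 1)) Filter.atTop (nhds c₀))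
    (hb₀ : 0 < b₀) (hq2 : 2 < q) (hqp : q ≤ p)
    (hf4 : Filter.Tendsto (fun t : ℝ => f t / t ^ (q - 1))
      (nhdsWithin 0 (Set.Ioi 0)) (nhds b₀))
    (hf5 : StrictMonoOn (fun t : ℝ => f t / t) (Set.Ioi 0))
    (hhf : Function.LeftInverse h f) (hfh : Function.RightInverse h f) :
    ∃ c₂ δ' : ℝ, 0 < c₂ ∧ 0 < δ' ∧
      (∀ t : ℝ, 0 ≤ t → t < δ' → c₂ * t ^ (q / (q - 1)) ≤ ∫ s in (0:ℝ)..t, h s) ∧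
      (∀ t : ℝ, δ' ≤ t → c₂ * t ^ (p / (p - 1)) ≤ ∫ s in (0:ℝ)..t, h s) :=
  stmt_5_general f h c₀ p b₀ q hf1 hf01 hp hf3 hb₀ hq2 hf4 hhf hfh
end

section
/- Suppose f : ℝ → ℝ satisfies (f1)–(f5) and let h = f⁻¹. Then the function t ↦ h(t)/t is strictly decreasing on (0, ∞), i.e., for all 0 < s < t one has h(s)/s > h(t)/t. -/
theorem stmt_6 (f h : ℝ → ℝ) (c₀ p b₀ q : ℝ)
    (hf1 : ContDiff ℝ 1 f) (hf01 : f 0 = 0) (hf02 : deriv f 0 = 0)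
    (hf2 : ∀ t : ℝ, f (-t) = - f t)
    (hc₀ : 0 < c₀) (hp : 2 < p)
    (hf3 : Filter.Tendsto (fun t : ℝ => f t / t ^ (p - 1)) Filter.atTop (nhds c₀))
    (hb₀ : 0 < b₀) (hq2 : 2 < q) (hqp : q ≤ p)
    (hf4 : Filter.Tendsto (fun t : ℝ => f t / t ^ (q - 1))
      (nhdsWithin 0 (Set.Ioi 0)) (nhds b₀))
    (hf5 : StrictMonoOn (fun t : ℝ => f t / t) (Set.Ioi 0))
    (hhf : Function.LeftInverse h f) (hfh : Function.RightInverse h f) :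
    ∀ s t : ℝ, 0 < s → s < t → h t / t < h s / s := by
  -- f is positive on (0, ∞)
  have hpos : ∀ x : ℝ, 0 < x → 0 < f x := by
    have h1 : ∀ᶠ t in nhdsWithin 0 (Set.Ioi 0), 0 < f t / t ^ (q - 1) :=
      hf4.eventually (eventually_gt_nhds hb₀)
    rw [eventually_nhdsWithin_iff, Metric.eventually_nhds_iff] at h1
    obtain ⟨δ, hδ, hδ'⟩ := h1
    intro x hx
    set u := min x δ / 2 with hu
    have hminpos : 0 < min x δ := lt_min hx hδ
    have hu0 : 0 < u := by positivity
    have hux : u < x := by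
      have : min x δ ≤ x := min_le_left _ _
      have : u ≤ x / 2 := by rw [hu]; linarith
      linarith
    have huδ : u < δ := by
      have : min x δ ≤ δ := min_le_right _ _
      have : u ≤ δ / 2 := by rw [hu]; linarith
      linarith
    have hfu : 0 < f u := by
      have hd : dist u 0 < δ := by
        rw [Real.dist_eq, sub_zero, abs_of_pos hu0]; exact huδ
      have hq' := hδ' hd (Set.mem_Ioi.mpr hu0)
      have hupow : 0 < u ^ (q - 1) := Real.rpow_pos_of_pos hu0 _
      have := mul_pos hq' hupow
      rwa [div_mul_cancel₀ _ (ne_of_gt hupow)] at this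
    have hr := hf5 (Set.mem_Ioi.mpr hu0) (Set.mem_Ioi.mpr hx) hux
    simp only at hr
    have h0 : 0 < f u / u := div_pos hfu hu0
    have : 0 < f x / x := h0.trans hr
    have := mul_pos this hx
    rwa [div_mul_cancel₀ _ (ne_of_gt hx)] at this
  -- f is strictly increasing on (0, ∞)
  have hmono : StrictMonoOn f (Set.Ioi 0) := by
    intro a ha b hb hab
    simp only [Set.mem_Ioi] at ha hb
    have hr := hf5 (Set.mem_Ioi.mpr ha) (Set.mem_Ioi.mpr hb) hab
    simp only at hr
    rw [div_lt_div_iff₀ ha hb] at hr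
    nlinarith [hpos b hb]
  intro s t hs hst
  have ht : 0 < t := hs.trans hst
  have hfa : f (h s) = s := hfh s
  have hfb : f (h t) = t := hfh t
  -- h s > 0
  have hhpos : ∀ x : ℝ, 0 < x → 0 < h x := by
    intro x hx
    by_contra hle
    push_neg at hle
    rcases lt_or_eq_of_le hle with hlt | heq
    · have : 0 < f (-(h x)) := hpos _ (by linarith)
      rw [hf2] at this
      have : f (h x) < 0 := by linarith
      rw [hfh x] at this; linarith
    · have : f (h x) = 0 := by rw [heq] at *; rw [← heq] at hf01 ⊢; simp [heq, hf01]
      rw [hfh x] at this; linarith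
  have ha : 0 < h s := hhpos s hs
  have hb : 0 < h t := hhpos t ht
  have hab : h s < h t := by
    by_contra hle
    push_neg at hle
    rcases lt_or_eq_of_le hle with hlt | heq
    · have := hmono (Set.mem_Ioi.mpr hb) (Set.mem_Ioi.mpr ha) hlt
      rw [hfa, hfb] at this; linarith
    · have : f (h t) = f (h s) := by rw [heq]
      rw [hfa, hfb] at this; linarith
  have hr := hf5 (Set.mem_Ioi.mpr ha) (Set.mem_Ioi.mpr hb) hab
  simp only [hfa, hfb] at hr
  rw [div_lt_div_iff₀ ha hb] at hr
  rw [div_lt_div_iff₀ ht hs]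
  nlinarith
end

section
/- Suppose f : ℝ → ℝ satisfies (f1)–(f5), let h = f⁻¹ and H(t) = ∫₀ᵗ h(s) ds. Then the function t ↦ H(t) − (1/2) h(t) t is strictly increasing on (0, ∞), i.e., for all 0 < s < t one has H(s) − (1/2) h(s) s < H(t) − (1/2) h(t) t. -/
theorem stmt_7 (f h : ℝ → ℝ) (c₀ p b₀ q : ℝ)
    (hf1 : ContDiff ℝ 1 f) (hf01 : f 0 = 0) (hf02 : deriv f 0 = 0)
    (hf2 : ∀ t : ℝ, f (-t) = - f t)
    (hc₀ : 0 < c₀) (hp : 2 < p)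
    (hf3 : Filter.Tendsto (fun t : ℝ => f t / t ^ (p - 1)) Filter.atTop (nhds c₀))
    (hb₀ : 0 < b₀) (hq2 : 2 < q) (hqp : q ≤ p)
    (hf4 : Filter.Tendsto (fun t : ℝ => f t / t ^ (q - 1))
      (nhdsWithin 0 (Set.Ioi 0)) (nhds b₀))
    (hf5 : StrictMonoOn (fun t : ℝ => f t / t) (Set.Ioi 0))
    (hhf : Function.LeftInverse h f) (hfh : Function.RightInverse h f) :
    ∀ s t : ℝ, 0 < s → s < t →
      (∫ u in (0:ℝ)..s, h u) - (1 / 2) * h s * s <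
        (∫ u in (0:ℝ)..t, h u) - (1 / 2) * h t * t := by
  -- positivity of f on (0,∞)
  have hfpos : ∀ x : ℝ, 0 < x → 0 < f x := by
    intro x hx
    have hev : ∀ᶠ t in nhdsWithin (0:ℝ) (Set.Ioi 0),
        b₀ / 2 < f t / t ^ (q - 1) := hf4.eventually (eventually_gt_nhds (half_lt_self hb₀))
    have hmem : Set.Ioo (0:ℝ) x ∈ nhdsWithin (0:ℝ) (Set.Ioi 0) :=
      Ioo_mem_nhdsGT_of_mem ⟨le_refl 0, hx⟩
    obtain ⟨t, ht1, ht2⟩ := (hev.and (Filter.eventually_of_mem hmem (fun y hy => hy))).exists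
    have htpos : 0 < t := ht2.1
    have hpow : 0 < t ^ (q - 1) := Real.rpow_pos_of_pos htpos _
    have hft : 0 < f t := by
      have h1 : 0 < f t / t ^ (q - 1) := lt_trans (half_pos hb₀) ht1
      have := mul_pos h1 hpow
      rwa [div_mul_cancel₀ _ (ne_of_gt hpow)] at this
    have h2 : f t / t < f x / x := hf5 htpos hx ht2.2
    have h3 : 0 < f x / x := lt_trans (div_pos hft htpos) h2
    have := mul_pos h3 hx
    rwa [div_mul_cancel₀ _ (ne_of_gt hx)] at this
  -- strict monotonicity of f on ℝ
  have hsm : StrictMono f := by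
    intro a b hab
    rcases lt_trichotomy a 0 with ha | ha | ha
    · rcases lt_trichotomy b 0 with hb | hb | hb
      · have h1 : f (-a) / (-a) > f (-b) / (-b) :=
          hf5 (by simpa using hb) (by simpa using ha) (by linarith)
        have hfa : 0 < f (-a) := hfpos _ (by linarith)
        have hfb : 0 < f (-b) := hfpos _ (by linarith)
        have hb' : f (-b) < f (-a) := by
          have hna : (0:ℝ) < -a := by linarith
          have hnb : (0:ℝ) < -b := by linarith
          rw [gt_iff_lt, div_lt_div_iff₀ hnb hna] at h1
          nlinarith
        nlinarith [hf2 a, hf2 b]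
      · subst hb
        have := hfpos (-a) (by linarith)
        nlinarith [hf2 a]
      · have h1 : f a < 0 := by nlinarith [hf2 a, hfpos (-a) (by linarith : (0:ℝ) < -a)]
        exact lt_trans h1 (hfpos b hb)
    · subst ha; rw [hf01]; exact hfpos b hab
    · have h1 : f a / a < f b / b := hf5 ha (lt_trans ha hab) hab
      rw [div_lt_div_iff₀ ha (lt_trans ha hab)] at h1
      nlinarith [hfpos a ha]
  have hsurj : Function.Surjective f := hfh.surjective
  -- h equals the inverse order iso, hence continuous
  have hheq : h = ⇑(StrictMono.orderIsoOfSurjective f hsm hsurj).symm := by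
    funext y
    apply hsm.injective
    exact (hfh y).trans (StrictMono.orderIsoOfSurjective_self_symm_apply f hsm hsurj y).symm
  have hhcont : Continuous h := by
    rw [hheq]; exact (StrictMono.orderIsoOfSurjective f hsm hsurj).symm.continuous
  -- h positive on (0,∞)
  have hhpos : ∀ u : ℝ, 0 < u → 0 < h u := by
    intro u hu
    by_contra hc
    push_neg at hc
    have h1 : f (h u) ≤ f 0 := hsm.le_iff_le.mpr hc
    rw [hfh u, hf01] at h1
    linarith
  -- h u / u strictly antitone
  have hdiv : ∀ u v : ℝ, 0 < u → u < v → h v / v < h u / u := by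
    intro u v hu huv
    have hhu := hhpos u hu
    have hhv := hhpos v (lt_trans hu huv)
    have hlt : h u < h v := by
      have : f (h u) < f (h v) := by rw [hfh, hfh]; exact huv
      exact hsm.lt_iff_lt.mp this
    have h5 : f (h u) / h u < f (h v) / h v := hf5 hhu hhv hlt
    rw [hfh, hfh] at h5
    rw [div_lt_div_iff₀ (lt_trans hu huv) hu]
    rw [div_lt_div_iff₀ hhu hhv] at h5
    nlinarith
  intro s t hs hst
  have ht : 0 < t := lt_trans hs hst
  -- pointwise bound on [s,t]
  have hptw : ∀ u ∈ Set.Icc s t, (h t / t) * u ≤ h u := by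
    intro u hu
    rcases eq_or_lt_of_le hu.2 with hueq | hult
    · subst hueq
      rw [div_mul_cancel₀ _ (ne_of_gt ht)]
    · have hupos : 0 < u := lt_of_lt_of_le hs hu.1
      have hd := hdiv u t hupos hult
      rw [div_lt_div_iff₀ ht hupos] at hd
      rw [div_mul_eq_mul_div, div_le_iff₀ ht]
      nlinarith
  have hint1 : IntervalIntegrable h MeasureTheory.volume 0 s :=
    hhcont.intervalIntegrable 0 s
  have hint2 : IntervalIntegrable h MeasureTheory.volume s t :=
    hhcont.intervalIntegrable s t
  have hsplit : (∫ u in (0:ℝ)..s, h u) + (∫ u in s..t, h u) = ∫ u in (0:ℝ)..t, h u :=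
    intervalIntegral.integral_add_adjacent_intervals hint1 hint2
  have hmono : (∫ u in s..t, (h t / t) * u) ≤ ∫ u in s..t, h u := by
    apply intervalIntegral.integral_mono_on (le_of_lt hst) _ hint2 hptw
    exact (continuous_const.mul continuous_id).intervalIntegrable s t
  have hval : (∫ u in s..t, (h t / t) * u) = (h t / t) * ((t ^ 2 - s ^ 2) / 2) := by
    rw [intervalIntegral.integral_const_mul, integral_id]
  have hAB : h t / t < h s / s := hdiv s t hs hst
  have hts : h t = (h t / t) * t := by field_simp
  have hss : h s = (h s / s) * s := by field_simp
  nlinarith [hmono, hval, hsplit, sq_nonneg s, mul_pos hs hs,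
    mul_lt_mul_of_pos_right hAB (mul_pos hs hs)]
end

section
/- Let Ω ⊂ ℝ^N be a measurable set of finite positive Lebesgue measure, p > 2, p' = p/(p−1), T : L^{p'}(Ω) → L^{p}(Ω) a bounded linear operator, and h : ℝ → ℝ a continuous function with |h(t)| ≤ a(1 + |t|^{1/(p−1)}) for all t and some a > 0; set H(t) = ∫₀ᵗ h(s) ds and Ψ(w) = ∫_Ω H(w) dx − (1/2) ∫_Ω w·Tw dx. Assume there exist C > 0 and C̃ ≥ 0 such that H(t) − (1/2) h(t) t ≥ C |t|^{p/(p−1)} − C̃ for all t ∈ ℝ. If a sequence {wₙ} ⊂ L^{p'}(Ω) satisfies Ψ(wₙ) → c ∈ ℝ and sup_{‖η‖_{L^{p'}} ≤ 1} |∫_Ω (h(wₙ) − T wₙ) η dx| → 0, then {wₙ} is bounded in L^{p'}(Ω). -/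
/-!
Pairing the Palais–Smale sequence with itself: `Ψ(w) - ½ Ψ'(w)w = ∫ (H(w) - ½ h(w) w)`, in which
the quadratic term `∫ w T w` cancels. The lower bound on `H - ½ h t` turns this into
`C ‖w‖^{p'} - C̃ |Ω| ≤ Ψ(w) - ½ Ψ'(w)w ≤ c + 1 + ½ ‖w‖` for large `n`, and since `p' > 1` the left
side grows superlinearly in `‖w‖`.
-/

open MeasureTheory Filter Set

theorem one_add_rpow_sub_one_mul {q x : ℝ} (hq : 1 ≤ q) (hx : 0 ≤ x) :
    (1 + x ^ (q - 1)) * x = x + x ^ q := by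
  have h := Real.rpow_add_one' hx (y := q - 1) (by linarith)
  rw [sub_add_cancel] at h
  rw [h]; ring

section Growth

variable {h : ℝ → ℝ} {a q : ℝ}

theorem abs_mul_le_of_abs_le_one_add_rpow (hq : 1 ≤ q)
    (hgrowth : ∀ s, |h s| ≤ a * (1 + |s| ^ (q - 1))) (t : ℝ) :
    |h t * t| ≤ a * (|t| + |t| ^ q) := by
  rw [abs_mul, ← one_add_rpow_sub_one_mul hq (abs_nonneg t), ← mul_assoc]
  exact mul_le_mul_of_nonneg_right (hgrowth t) (abs_nonneg t)

theorem abs_primitive_le_of_abs_le_one_add_rpow (hq : 1 ≤ q) (ha : 0 ≤ a)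
    (hgrowth : ∀ s, |h s| ≤ a * (1 + |s| ^ (q - 1))) (t : ℝ) :
    |∫ s in (0 : ℝ)..t, h s| ≤ a * (|t| + |t| ^ q) := by
  have hbound : ∀ s ∈ uIoc 0 t, ‖h s‖ ≤ a * (1 + |t| ^ (q - 1)) := fun s hs => by
    have hst : |s| ≤ |t| := by simpa using abs_sub_left_of_mem_uIcc (uIoc_subset_uIcc hs)
    calc ‖h s‖ ≤ a * (1 + |s| ^ (q - 1)) := hgrowth s
      _ ≤ a * (1 + |t| ^ (q - 1)) := by gcongr
  have := intervalIntegral.norm_integral_le_of_norm_le_const hbound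
  rwa [Real.norm_eq_abs, sub_zero, mul_assoc, one_add_rpow_sub_one_mul hq (abs_nonneg t)] at this

end Growth

theorem exists_forall_le_of_mul_rpow_le_add {q C L : ℝ} (hq : 1 < q) (hC : 0 < C) (hL : 0 < L)
    (K : ℝ) : ∃ B, ∀ t, 0 ≤ t → C * t ^ q ≤ K + L * t → t ≤ B := by
  refine ⟨max ((2 * L / C) ^ (q - 1)⁻¹) (K / L), fun t ht hle => ?_⟩
  rcases le_or_gt t ((2 * L / C) ^ (q - 1)⁻¹) with ht₀ | ht₀
  · exact le_max_of_le_left ht₀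
  -- past the threshold `C t^(q-1) ≥ 2L`, so `C t^q ≥ 2 L t` absorbs the linear term
  have hq₁ : 0 < q - 1 := by linarith
  have hpow : 2 * L / C ≤ t ^ (q - 1) := by
    calc 2 * L / C = ((2 * L / C) ^ (q - 1)⁻¹) ^ (q - 1) :=
          (Real.rpow_inv_rpow (by positivity) hq₁.ne').symm
      _ ≤ t ^ (q - 1) := by gcongr
  have hsplit : t ^ q = t ^ (q - 1) * t := by
    linear_combination -one_add_rpow_sub_one_mul hq.le ht
  have : 2 * L * t ≤ C * t ^ q := by
    rw [hsplit, ← mul_assoc]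
    exact mul_le_mul_of_nonneg_right ((div_le_iff₀' hC).mp hpow) ht
  exact le_max_of_le_right ((le_div_iff₀ hL).mpr (by linarith))

namespace MeasureTheory

variable {α : Type*} [MeasurableSpace α] {μ : Measure α}

theorem MemLp.integrable_abs_rpow {f : α → ℝ} {q : ℝ} (hq : 0 < q)
    (hf : MemLp f (ENNReal.ofReal q) μ) : Integrable (fun x => |f x| ^ q) μ := by
  simpa [ENNReal.toReal_ofReal hq.le] using hf.integrable_norm_rpow (by simpa using hq) (by simp)

theorem Lp.integral_abs_rpow_eq_norm_rpow {q : ℝ} (hq : 0 < q) (f : Lp ℝ (ENNReal.ofReal q) μ) :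
    ∫ x, |f x| ^ q ∂μ = ‖f‖ ^ q := by
  rw [Lp.norm_def, toReal_eLpNorm (Lp.aestronglyMeasurable f),
    lpNorm_eq_integral_norm_rpow_toReal (by simpa using hq) (by simp) (Lp.aestronglyMeasurable f),
    ENNReal.toReal_ofReal hq.le]
  simp only [Real.norm_eq_abs]
  exact (Real.rpow_inv_rpow (integral_nonneg fun x => by positivity) hq.ne').symm

theorem Lp.abs_integral_mul_le_of_forall_norm_le_one {q : ENNReal} [Fact (1 ≤ q)] {g : α → ℝ}
    {ε : ℝ} (hg : ∀ η : Lp ℝ q μ, ‖η‖ ≤ 1 → |∫ x, g x * η x ∂μ| ≤ ε) (f : Lp ℝ q μ) :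
    |∫ x, g x * f x ∂μ| ≤ ε * ‖f‖ := by
  rcases eq_or_ne f 0 with hf | hf
  · have hzero : ⇑f =ᵐ[μ] 0 := hf ▸ Lp.coeFn_zero ℝ q μ
    rw [integral_eq_zero_of_ae (hzero.mono fun x hx => by simp [hx]), hf]
    simp
  have hpos : 0 < ‖f‖ := norm_pos_iff.mpr hf
  have hscale : ∫ x, g x * (‖f‖⁻¹ • f) x ∂μ = ‖f‖⁻¹ * ∫ x, g x * f x ∂μ := by
    rw [← integral_const_mul]
    refine integral_congr_ae <| (Lp.coeFn_smul ‖f‖⁻¹ f).mono fun x hx => ?_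
    simp only [hx, Pi.smul_apply, smul_eq_mul]; ring
  have := hg (‖f‖⁻¹ • f) (by rw [norm_smul, norm_inv, norm_norm, inv_mul_cancel₀ hpos.ne'])
  rwa [hscale, abs_mul, abs_inv, abs_norm, inv_mul_le_iff₀ hpos, mul_comm] at this

variable [IsFiniteMeasure μ]

theorem integrable_of_abs_le_mul_add_rpow {f g : α → ℝ} {a q : ℝ} (hq : 1 ≤ q)
    (hf : MemLp f (ENNReal.ofReal q) μ) (hg : AEStronglyMeasurable g μ)
    (hbound : ∀ x, |g x| ≤ a * (|f x| + |f x| ^ q)) : Integrable g μ :=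
  ((hf.integrable (by simpa using hq)).abs.add (hf.integrable_abs_rpow (by linarith))).const_mul a
    |>.mono' hg (ae_of_all _ hbound)

theorem mul_norm_rpow_sub_le_integral {q : ℝ} (hq : 0 < q) {φ : ℝ → ℝ} {C D : ℝ}
    (hφ : ∀ t, C * |t| ^ q - D ≤ φ t) (f : Lp ℝ (ENNReal.ofReal q) μ)
    (hint : Integrable (fun x => φ (f x)) μ) :
    C * ‖f‖ ^ q - μ.real univ * D ≤ ∫ x, φ (f x) ∂μ := by
  have hlow : Integrable (fun x => C * |f x| ^ q - D) μ :=
    ((Lp.memLp f).integrable_abs_rpow hq |>.const_mul C).sub (integrable_const D)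
  calc C * ‖f‖ ^ q - μ.real univ * D = ∫ x, (C * |f x| ^ q - D) ∂μ := by
        rw [integral_sub ((Lp.memLp f).integrable_abs_rpow hq |>.const_mul C) (integrable_const D),
          integral_const_mul, Lp.integral_abs_rpow_eq_norm_rpow hq, integral_const, smul_eq_mul]
    _ ≤ ∫ x, φ (f x) ∂μ := integral_mono hlow hint fun x => hφ (f x)

end MeasureTheory

section Energy

variable {α : Type*} [MeasurableSpace α] {μ : Measure α} [IsFiniteMeasure μ] {h : ℝ → ℝ} {a q : ℝ}

theorem integrable_comp_mul_of_abs_le_one_add_rpow (hq : 1 ≤ q) (hcont : Continuous h)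
    (hgrowth : ∀ s, |h s| ≤ a * (1 + |s| ^ (q - 1))) {f : α → ℝ}
    (hf : MemLp f (ENNReal.ofReal q) μ) : Integrable (fun x => h (f x) * f x) μ :=
  integrable_of_abs_le_mul_add_rpow hq hf
    ((hcont.comp_aestronglyMeasurable hf.1).mul hf.1)
    fun x => abs_mul_le_of_abs_le_one_add_rpow hq hgrowth (f x)

theorem integrable_primitive_comp_of_abs_le_one_add_rpow (hq : 1 ≤ q) (ha : 0 ≤ a)
    (hcont : Continuous h) (hgrowth : ∀ s, |h s| ≤ a * (1 + |s| ^ (q - 1))) {f : α → ℝ}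
    (hf : MemLp f (ENNReal.ofReal q) μ) : Integrable (fun x => ∫ s in (0 : ℝ)..f x, h s) μ :=
  integrable_of_abs_le_mul_add_rpow hq hf
    ((intervalIntegral.continuous_primitive (hcont.intervalIntegrable) 0).comp_aestronglyMeasurable
      hf.1)
    fun x => abs_primitive_le_of_abs_le_one_add_rpow hq ha hgrowth (f x)

theorem mul_norm_rpow_sub_le_integral_primitive_sub (hq : 1 ≤ q) (ha : 0 ≤ a)
    (hcont : Continuous h) (hgrowth : ∀ s, |h s| ≤ a * (1 + |s| ^ (q - 1))) {C D : ℝ}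
    (hlower : ∀ t, C * |t| ^ q - D ≤ (∫ s in (0 : ℝ)..t, h s) - 1 / 2 * h t * t)
    (f : Lp ℝ (ENNReal.ofReal q) μ) :
    C * ‖f‖ ^ q - μ.real univ * D ≤
      (∫ x, (∫ s in (0 : ℝ)..f x, h s) ∂μ) - 1 / 2 * ∫ x, h (f x) * f x ∂μ := by
  have hH := integrable_primitive_comp_of_abs_le_one_add_rpow hq ha hcont hgrowth (Lp.memLp f)
  have hhf : Integrable (fun x => 1 / 2 * h (f x) * f x) μ := by
    simpa only [mul_assoc] using
      (integrable_comp_mul_of_abs_le_one_add_rpow hq hcont hgrowth (Lp.memLp f)).const_mul (1 / 2)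
  calc C * ‖f‖ ^ q - μ.real univ * D
      ≤ ∫ x, ((∫ s in (0 : ℝ)..f x, h s) - 1 / 2 * h (f x) * f x) ∂μ :=
        mul_norm_rpow_sub_le_integral (by linarith) hlower f (hH.sub hhf)
    _ = _ := by
        rw [integral_sub hH hhf]
        simp only [mul_assoc, integral_const_mul]

theorem integral_sub_mul_eq_of_abs_le_one_add_rpow {p : ℝ}
    [ENNReal.HolderTriple (ENNReal.ofReal q) (ENNReal.ofReal p) 1] (hq : 1 ≤ q)
    (hcont : Continuous h) (hgrowth : ∀ s, |h s| ≤ a * (1 + |s| ^ (q - 1)))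
    (f : Lp ℝ (ENNReal.ofReal q) μ) (v : Lp ℝ (ENNReal.ofReal p) μ) :
    ∫ x, (h (f x) - v x) * f x ∂μ = ∫ x, h (f x) * f x ∂μ - ∫ x, f x * v x ∂μ := by
  have hfv : Integrable (fun x => f x * v x) μ := (Lp.memLp f).integrable_mul (Lp.memLp v)
  rw [← integral_sub (integrable_comp_mul_of_abs_le_one_add_rpow hq hcont hgrowth (Lp.memLp f)) hfv]
  congr 1 with x
  ring

end Energy

theorem stmt_12_general (N : ℕ) (Ω : Set (Fin N → ℝ))
    (hΩfin : volume Ω < ⊤)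
    (p : ℝ) (hp : 2 < p)
    [Fact (1 ≤ ENNReal.ofReal (p / (p - 1)))] [Fact (1 ≤ ENNReal.ofReal p)]
    (T : Lp ℝ (ENNReal.ofReal (p / (p - 1))) (volume.restrict Ω) →L[ℝ] Lp ℝ (ENNReal.ofReal p) (volume.restrict Ω))
    (h : ℝ → ℝ) (hcont : Continuous h)
    (a : ℝ) (ha : 0 < a) (hgrowth : ∀ t : ℝ, |h t| ≤ a * (1 + |t| ^ (1 / (p - 1))))
    (Ψ : Lp ℝ (ENNReal.ofReal (p / (p - 1))) (volume.restrict Ω) → ℝ)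
    (hΨ : ∀ w : Lp ℝ (ENNReal.ofReal (p / (p - 1))) (volume.restrict Ω),
      Ψ w = (∫ x, (∫ s in (0:ℝ)..(w x), h s) ∂(volume.restrict Ω)) - (1 / 2) * ∫ x, w x * T w x ∂(volume.restrict Ω))
    (C Ctil : ℝ) (hC : 0 < C)
    (hlower : ∀ t : ℝ,
      C * |t| ^ (p / (p - 1)) - Ctil ≤ (∫ s in (0:ℝ)..t, h s) - (1 / 2) * h t * t)
    (w : ℕ → Lp ℝ (ENNReal.ofReal (p / (p - 1))) (volume.restrict Ω)) (c : ℝ)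
    (hPS1 : Filter.Tendsto (fun n => Ψ (w n)) Filter.atTop (nhds c))
    (hPS2 : ∀ ε : ℝ, 0 < ε → ∃ n₀ : ℕ, ∀ n ≥ n₀,
      ∀ η : Lp ℝ (ENNReal.ofReal (p / (p - 1))) (volume.restrict Ω), ‖η‖ ≤ 1 →
        |∫ x, (h (w n x) - T (w n) x) * η x ∂(volume.restrict Ω)| ≤ ε) :
    ∃ B : ℝ, ∀ n : ℕ, ‖w n‖ ≤ B := by
  have : IsFiniteMeasure (volume.restrict Ω) := ⟨by rwa [Measure.restrict_apply_univ]⟩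
  have hpq : (p / (p - 1)).HolderConjugate p :=
    (Real.HolderConjugate.conjExponent (by linarith)).symm
  have := hpq.ennrealOfReal
  have hgrowth' : ∀ s, |h s| ≤ a * (1 + |s| ^ (p / (p - 1) - 1)) := by
    rwa [div_sub_one hpq.symm.sub_one_ne_zero, sub_sub_cancel]
  obtain ⟨B, hB⟩ := exists_forall_le_of_mul_rpow_le_add hpq.lt hC one_half_pos
    (c + 1 + (volume.restrict Ω).real univ * Ctil)
  have hΨ_le : ∀ᶠ n in atTop, Ψ (w n) ≤ c + 1 := hPS1.eventually_le_const (lt_add_one c)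
  have hΨ'_le : ∀ᶠ n in atTop,
      |∫ x, (h (w n x) - T (w n) x) * w n x ∂(volume.restrict Ω)| ≤ ‖w n‖ := by
    obtain ⟨n₀, hn₀⟩ := hPS2 1 one_pos
    filter_upwards [eventually_ge_atTop n₀] with n hn
    simpa only [one_mul] using Lp.abs_integral_mul_le_of_forall_norm_le_one (hn₀ n hn) (w n)
  have hbound : ∀ᶠ n in atTop, ‖w n‖ ≤ B := by
    filter_upwards [hΨ_le, hΨ'_le] with n hΨn hΨ'n
    refine hB ‖w n‖ (norm_nonneg _) ?_
    have hlow := mul_norm_rpow_sub_le_integral_primitive_sub hpq.lt.le ha.le hcont hgrowth' hlower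
      (w n)
    have hsplit :=
      integral_sub_mul_eq_of_abs_le_one_add_rpow hpq.lt.le hcont hgrowth' (w n) (T (w n))
    rw [hΨ] at hΨn
    linarith [abs_le.mp hΨ'n]
  obtain ⟨B', hB'⟩ := (isBoundedUnder_of_eventually_le hbound).bddAbove_range
  exact ⟨B', fun n => hB' (mem_range_self n)⟩

theorem stmt_12 (N : ℕ) (Ω : Set (Fin N → ℝ)) (hΩmeas : MeasurableSet Ω)
    (hΩpos : 0 < volume Ω) (hΩfin : volume Ω < ⊤)
    (p : ℝ) (hp : 2 < p)
    [Fact (1 ≤ ENNReal.ofReal (p / (p - 1)))] [Fact (1 ≤ ENNReal.ofReal p)]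
    (T : Lp ℝ (ENNReal.ofReal (p / (p - 1))) (volume.restrict Ω) →L[ℝ] Lp ℝ (ENNReal.ofReal p) (volume.restrict Ω))
    (h : ℝ → ℝ) (hcont : Continuous h)
    (a : ℝ) (ha : 0 < a) (hgrowth : ∀ t : ℝ, |h t| ≤ a * (1 + |t| ^ (1 / (p - 1))))
    (Ψ : Lp ℝ (ENNReal.ofReal (p / (p - 1))) (volume.restrict Ω) → ℝ)
    (hΨ : ∀ w : Lp ℝ (ENNReal.ofReal (p / (p - 1))) (volume.restrict Ω),
      Ψ w = (∫ x, (∫ s in (0:ℝ)..(w x), h s) ∂(volume.restrict Ω)) - (1 / 2) * ∫ x, w x * T w x ∂(volume.restrict Ω))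
    (C Ctil : ℝ) (hC : 0 < C) (hCtil : 0 ≤ Ctil)
    (hlower : ∀ t : ℝ,
      C * |t| ^ (p / (p - 1)) - Ctil ≤ (∫ s in (0:ℝ)..t, h s) - (1 / 2) * h t * t)
    (w : ℕ → Lp ℝ (ENNReal.ofReal (p / (p - 1))) (volume.restrict Ω)) (c : ℝ)
    (hPS1 : Filter.Tendsto (fun n => Ψ (w n)) Filter.atTop (nhds c))
    (hPS2 : ∀ ε : ℝ, 0 < ε → ∃ n₀ : ℕ, ∀ n ≥ n₀,
      ∀ η : Lp ℝ (ENNReal.ofReal (p / (p - 1))) (volume.restrict Ω), ‖η‖ ≤ 1 →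
        |∫ x, (h (w n x) - T (w n) x) * η x ∂(volume.restrict Ω)| ≤ ε) :
    ∃ B : ℝ, ∀ n : ℕ, ‖w n‖ ≤ B :=
  stmt_12_general N Ω hΩfin p hp T h hcont a ha hgrowth Ψ hΨ C Ctil hC hlower w c hPS1 hPS2
end

section
/- Let Ω ⊂ ℝ^N be a measurable set of finite positive Lebesgue measure, p > 2, q ∈ (2, p], p' = p/(p−1), and let T : L^{p'}(Ω) → L^{p}(Ω) be a compact linear operator. Let h : ℝ → ℝ be a continuous, odd, strictly increasing bijection of ℝ satisfying: |h(t)| ≤ a(1 + |t|^{1/(p−1)}) for all t and some a > 0; and there exist M₁, M₂, δ > 0 with |h(t)| ≥ M₁ |t|^{1/(p−1)} for |t| > δ and |h(t)| ≥ M₂ |t|^{1/(q−1)} for |t| ≤ δ. Set H(t) = ∫₀ᵗ h(s) ds and Ψ(w) = ∫_Ω H(w) dx − (1/2) ∫_Ω w·Tw dx, and assume there exist C > 0, C̃ ≥ 0 with H(t) − (1/2) h(t) t ≥ C |t|^{p/(p−1)} − C̃ for all t. Then every sequence {wₙ} ⊂ L^{p'}(Ω) with Ψ(wₙ) → c ∈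 ℝ and sup_{‖η‖_{L^{p'}} ≤ 1} |∫_Ω (h(wₙ) − T wₙ) η dx| → 0 has a subsequence converging strongly in L^{p'}(Ω). -/
/-!
Testing the Palais–Smale condition against `wₙ / ‖wₙ‖` bounds `∫ (h(wₙ) - T wₙ) wₙ` by `‖wₙ‖`.
The `T`-terms cancel in `Ψ(w) - ½ ∫ (h(w) - T w) w = ∫ (H(w) - ½ h(w) w)`, so the lower bound on
`H(t) - ½ h(t) t` gives `C ‖wₙ‖^{p'} ≤ Ψ(wₙ) + ‖wₙ‖ / 2 + C̃ |Ω|`: the sequence is bounded.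
By compactness `T wₙ → v` in `Lᵖ` along a subsequence. Testing against the dual element
`f |f|^{p-2} / ‖f‖^{p-1}` of `f = h(wₙ) - T wₙ` shows that `f → 0` in `Lᵖ`, hence `h(wₙ) → v`.
Finally `wₙ = h⁻¹(h(wₙ))` with `|h⁻¹(y)| ≤ δ + (|y| / M₁)^{p-1}`: along an a.e. convergent
subsequence the `wₙ` are uniformly `L^{p'}`-integrable, and Vitali's theorem gives `wₙ → h⁻¹(v)`.
-/

open MeasureTheory Filter Set Topology
open scoped ENNReal

theorem exists_le_of_mul_rpow_le {C s : ℝ} (hC : 0 < C) (hs : 1 < s) (A B : ℝ) :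
    ∃ R, ∀ r, 0 ≤ r → C * r ^ s ≤ A + B * r → r ≤ R := by
  refine ⟨max 1 (((|A| + |B|) / C) ^ (s - 1)⁻¹), fun r hr hle => ?_⟩
  by_contra! hlt
  have hr1 : 1 < r := (le_max_left _ _).trans_lt hlt
  have hK : (|A| + |B|) / C < r ^ (s - 1) := by
    have := Real.rpow_lt_rpow (by positivity) ((le_max_right _ _).trans_lt hlt)
      (by linarith : 0 < s - 1)
    rwa [← Real.rpow_mul (by positivity), inv_mul_cancel₀ (by linarith), Real.rpow_one] at this
  have hsplit : r ^ s = r ^ (s - 1) * r := by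
    rw [← Real.rpow_add_one' hr (by linarith), sub_add_cancel]
  rw [div_lt_iff₀ hC] at hK
  nlinarith [le_abs_self A, le_abs_self B, abs_nonneg A, abs_nonneg B]

theorem abs_le_add_rpow_of_le_abs {h : ℝ → ℝ} {M δ r : ℝ} (hM : 0 < M) (hδ : 0 ≤ δ) (hr : 0 < r)
    (hlow : ∀ t, δ < |t| → M * |t| ^ (1 / r) ≤ |h t|) (t : ℝ) :
    |t| ≤ δ + M⁻¹ ^ r * |h t| ^ r := by
  rcases le_or_gt |t| δ with ht | ht
  · linarith [show 0 ≤ M⁻¹ ^ r * |h t| ^ r by positivity]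
  have hroot : |t| ^ (1 / r) ≤ M⁻¹ * |h t| := by
    rw [← div_eq_inv_mul, le_div_iff₀ hM, mul_comm]; exact hlow t ht
  calc |t| = (|t| ^ (1 / r)) ^ r := by
        rw [← Real.rpow_mul (abs_nonneg t), one_div_mul_cancel hr.ne', Real.rpow_one]
    _ ≤ (M⁻¹ * |h t|) ^ r := by gcongr
    _ = M⁻¹ ^ r * |h t| ^ r := Real.mul_rpow (by positivity) (abs_nonneg _)
    _ ≤ δ + M⁻¹ ^ r * |h t| ^ r := by linarith

theorem abs_integral_zero_le_of_abs_le {h : ℝ → ℝ} {A B r : ℝ} (hB : 0 ≤ B) (hr : 0 ≤ r)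
    (hh : ∀ s, |h s| ≤ A + B * |s| ^ r) (t : ℝ) :
    |∫ s in (0 : ℝ)..t, h s| ≤ (A + B * |t| ^ r) * |t| := by
  have hbound := intervalIntegral.norm_integral_le_of_norm_le_const (a := 0) (b := t)
    (f := h) (C := A + B * |t| ^ r) fun s hs => by
      have hst : |s - 0| ≤ |t - 0| := abs_sub_left_of_mem_uIcc (uIoc_subset_uIcc hs)
      rw [sub_zero, sub_zero] at hst
      exact (hh s).trans (by gcongr)
  simpa using hbound

theorem exists_forall_norm_le_of_coercive {E : Type*} [SeminormedAddCommGroup E] {w : ℕ → E}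
    {u d : ℕ → ℝ} {C s K : ℝ} (hC : 0 < C) (hs : 1 < s)
    (hcoer : ∀ n, C * ‖w n‖ ^ s - K ≤ u n - 1 / 2 * d n) (hu : BddAbove (range u))
    (hd : ∀ᶠ n in atTop, |d n| ≤ ‖w n‖) : ∃ R, ∀ n, ‖w n‖ ≤ R := by
  obtain ⟨U, hU⟩ := hu
  obtain ⟨R₀, hR₀⟩ := exists_le_of_mul_rpow_le hC hs (U + K) (1 / 2)
  have hbdd : ∀ᶠ n in atTop, ‖w n‖ ≤ R₀ := hd.mono fun n hn =>
    hR₀ ‖w n‖ (norm_nonneg _) (by linarith [hcoer n, hU ⟨n, rfl⟩, neg_abs_le (d n)])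
  obtain ⟨R, hR⟩ := (isBoundedUnder_of_eventually_le hbdd).bddAbove_range
  exact ⟨R, fun n => hR ⟨n, rfl⟩⟩

theorem IsCompactOperator.exists_subseq_tendsto {𝕜 E F : Type*} [NontriviallyNormedField 𝕜]
    [SeminormedAddCommGroup E] [NormedSpace 𝕜 E] [NormedAddCommGroup F] [NormedSpace 𝕜 F]
    {T : E →L[𝕜] F} (hT : IsCompactOperator T) {x : ℕ → E} {R : ℝ} (hx : ∀ n, ‖x n‖ ≤ R) :
    ∃ φ : ℕ → ℕ, StrictMono φ ∧ ∃ v, Tendsto (fun n => T (x (φ n))) atTop (𝓝 v) := by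
  obtain ⟨K, hK, hsub⟩ := hT.image_closedBall_subset_compact (f := (T : E →ₗ[𝕜] F)) R
  obtain ⟨v, -, φ, hφ, hlim⟩ := hK.tendsto_subseq fun n =>
    hsub ⟨x n, mem_closedBall_zero_iff.2 (hx n), rfl⟩
  exact ⟨φ, hφ, v, hlim⟩

namespace MeasureTheory

variable {α : Type*} [MeasurableSpace α] {μ : Measure α}

theorem MemLp.comp_of_norm_le {E F : Type*} [NormedAddCommGroup E] [NormedAddCommGroup F]
    [IsFiniteMeasure μ] {g : E → F} (hg : Continuous g) {A B r : ℝ} (hr : 0 ≤ r)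
    (hgb : ∀ y, ‖g y‖ ≤ A + B * ‖y‖ ^ r) {q : ℝ≥0∞} {f : α → E} (hf : MemLp f q μ) :
    MemLp (fun x => g (f x)) (q / ENNReal.ofReal r) μ := by
  have hrpow := hf.norm_rpow_div (ENNReal.ofReal r)
  rw [ENNReal.toReal_ofReal hr] at hrpow
  exact ((memLp_const A).add (hrpow.const_mul B)).of_le (hg.comp_aestronglyMeasurable hf.1)
    (ae_of_all _ fun x => (hgb (f x)).trans (Real.le_norm_self _))

theorem tendsto_eLpNorm_sub_of_tendsto_eLpNorm_sub {ι E : Type*} [NormedAddCommGroup E]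
    {l : Filter ι} {p : ℝ≥0∞} (hp : 1 ≤ p) {F G : ι → α → E} {v : α → E}
    (hF : ∀ i, AEStronglyMeasurable (F i) μ) (hG : ∀ i, AEStronglyMeasurable (G i) μ)
    (hv : AEStronglyMeasurable v μ) (hFG : Tendsto (fun i => eLpNorm (F i - G i) p μ) l (𝓝 0))
    (hGv : Tendsto (fun i => eLpNorm (G i - v) p μ) l (𝓝 0)) :
    Tendsto (fun i => eLpNorm (F i - v) p μ) l (𝓝 0) := by
  refine tendsto_of_tendsto_of_tendsto_of_le_of_le tendsto_const_nhds (by simpa using hFG.add hGv)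
    (fun _ => bot_le) fun i => ?_
  calc eLpNorm (F i - v) p μ = eLpNorm ((F i - G i) + (G i - v)) p μ := by
        rw [sub_add_sub_cancel]
    _ ≤ eLpNorm (F i - G i) p μ + eLpNorm (G i - v) p μ :=
        eLpNorm_add_le ((hF i).sub (hG i)) ((hG i).sub hv) hp

section UnifIntegrable

variable {ι β γ : Type*} [NormedAddCommGroup β] [NormedAddCommGroup γ]

theorem UnifIntegrable.of_norm_le {p : ℝ≥0∞} {f : ι → α → β} {g : ι → α → γ}
    (hg : UnifIntegrable g p μ) (hfg : ∀ i x, ‖f i x‖ ≤ ‖g i x‖) : UnifIntegrable f p μ := by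
  intro ε hε
  obtain ⟨δ, hδ, H⟩ := hg hε
  refine ⟨δ, hδ, fun i s hs hμs => (eLpNorm_mono fun x => ?_).trans (H i s hs hμs)⟩
  by_cases hx : x ∈ s <;> simp [hx, hfg i x]

theorem UnifIntegrable.const_mul {p : ℝ≥0∞} {f : ι → α → ℝ} (hf : UnifIntegrable f p μ)
    (c : ℝ) : UnifIntegrable (fun i x => c * f i x) p μ := by
  intro ε hε
  obtain ⟨δ, hδ, H⟩ := hf (ε := ε / (|c| + 1)) (by positivity)
  refine ⟨δ, hδ, fun i s hs hμs => ?_⟩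
  have hind : s.indicator (fun x => c * f i x) = c • s.indicator (f i) := by
    ext x; by_cases hx : x ∈ s <;> simp [hx]
  calc eLpNorm (s.indicator fun x => c * f i x) p μ
      = ‖c‖ₑ * eLpNorm (s.indicator (f i)) p μ := by rw [hind, eLpNorm_const_smul]
    _ ≤ ENNReal.ofReal |c| * ENNReal.ofReal (ε / (|c| + 1)) := by
      rw [Real.enorm_eq_ofReal_abs]; exact mul_le_mul_right (H i s hs hμs) _
    _ ≤ ENNReal.ofReal ε := by
      rw [← ENNReal.ofReal_mul (abs_nonneg c)]
      refine ENNReal.ofReal_le_ofReal ?_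
      rw [mul_div_assoc', div_le_iff₀ (by positivity)]
      nlinarith [abs_nonneg c]

theorem UnifIntegrable.norm_rpow {q : ℝ≥0∞} {f : ι → α → β} (hf : UnifIntegrable f q μ)
    {r : ℝ} (hr : 0 < r) :
    UnifIntegrable (fun i x => ‖f i x‖ ^ r) (q / ENNReal.ofReal r) μ := by
  intro ε hε
  obtain ⟨δ, hδ, H⟩ := hf (ε := ε ^ r⁻¹) (by positivity)
  refine ⟨δ, hδ, fun i s hs hμs => ?_⟩
  have hind : s.indicator (fun x => ‖f i x‖ ^ r) = fun x => ‖s.indicator (f i) x‖ ^ r :=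
    indicator_comp_of_zero (g := fun y : β => ‖y‖ ^ r) (by simp [hr.ne'])
  rw [hind, eLpNorm_norm_rpow _ hr, ENNReal.div_mul_cancel (by simpa using hr) (by simp)]
  calc eLpNorm (s.indicator (f i)) q μ ^ r ≤ ENNReal.ofReal (ε ^ r⁻¹) ^ r :=
        ENNReal.rpow_le_rpow (H i s hs hμs) hr.le
    _ = ENNReal.ofReal ε := by
      rw [ENNReal.ofReal_rpow_of_pos (by positivity), ← Real.rpow_mul hε.le,
        inv_mul_cancel₀ hr.ne', Real.rpow_one]

theorem UnifIntegrable.comp_of_norm_le [IsFiniteMeasure μ] {q : ℝ≥0∞} {f : ι → α → β}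
    (hf : UnifIntegrable f q μ) (hfm : ∀ i, AEStronglyMeasurable (f i) μ) {g : β → γ}
    {A B r : ℝ} (hr : 0 < r) (hgb : ∀ y, ‖g y‖ ≤ A + B * ‖y‖ ^ r)
    (hq : 1 ≤ q / ENNReal.ofReal r) (hq_top : q ≠ ∞) :
    UnifIntegrable (fun i x => g (f i x)) (q / ENNReal.ofReal r) μ := by
  have hconst : UnifIntegrable (fun (_ : ι) (_ : α) => A) (q / ENNReal.ofReal r) μ :=
    unifIntegrable_const hq (ENNReal.div_ne_top hq_top (by simpa using hr)) (memLp_const A)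
  have hpow i : AEStronglyMeasurable (fun x => B * ‖f i x‖ ^ r) μ :=
    ((hfm i).norm.aemeasurable.pow_const r).aestronglyMeasurable.const_mul B
  refine (hconst.add ((hf.norm_rpow hr).const_mul B) hq (fun _ => aestronglyMeasurable_const)
    hpow).of_norm_le fun i x => ?_
  exact (hgb (f i x)).trans (Real.le_norm_self _)

theorem exists_subseq_tendsto_eLpNorm_comp [IsFiniteMeasure μ] {g : β → γ} (hg : Continuous g)
    {A B r : ℝ} (hr : 0 < r) (hgb : ∀ y, ‖g y‖ ≤ A + B * ‖y‖ ^ r) {q : ℝ≥0∞} (hq₁ : 1 ≤ q)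
    (hq : 1 ≤ q / ENNReal.ofReal r) (hq_top : q ≠ ∞) {f : ℕ → α → β} {f₀ : α → β}
    (hf : ∀ n, MemLp (f n) q μ) (hf₀ : MemLp f₀ q μ)
    (hlim : Tendsto (fun n => eLpNorm (f n - f₀) q μ) atTop (𝓝 0)) :
    ∃ ψ : ℕ → ℕ, StrictMono ψ ∧ Tendsto
      (fun k => eLpNorm ((fun x => g (f (ψ k) x)) - fun x => g (f₀ x)) (q / ENNReal.ofReal r) μ)
      atTop (𝓝 0) := by
  obtain ⟨ψ, hψ, hae⟩ := (tendstoInMeasure_of_tendsto_eLpNorm (by positivity)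
    (fun n => (hf n).1) hf₀.1 hlim).exists_seq_tendsto_ae
  have hUI := (unifIntegrable_of_tendsto_Lp hq₁ hq_top (fun k => hf (ψ k)) hf₀
    (hlim.comp hψ.tendsto_atTop)).comp_of_norm_le (fun k => (hf (ψ k)).1) hr hgb hq hq_top
  refine ⟨ψ, hψ, tendsto_Lp_finite_of_tendsto_ae hq (ENNReal.div_ne_top hq_top (by simpa using hr))
    (fun k => hg.comp_aestronglyMeasurable (hf (ψ k)).1) (hf₀.comp_of_norm_le hg hr.le hgb) hUI ?_⟩
  filter_upwards [hae] with x hx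
  exact (hg.tendsto _).comp hx

end UnifIntegrable

theorem integral_norm_rpow_eq_toReal_eLpNorm_rpow {E : Type*} [NormedAddCommGroup E] {p : ℝ}
    (hp : 0 < p) {f : α → E} (hf : MemLp f (ENNReal.ofReal p) μ) :
    ∫ x, ‖f x‖ ^ p ∂μ = (eLpNorm f (ENNReal.ofReal p) μ).toReal ^ p := by
  have hint : 0 ≤ ∫ x, ‖f x‖ ^ p ∂μ := integral_nonneg fun x => by positivity
  rw [hf.eLpNorm_eq_integral_rpow_norm (by simpa using hp) (by simp),
    ENNReal.toReal_ofReal hp.le, ENNReal.toReal_ofReal (by positivity),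
    ← Real.rpow_mul hint, inv_mul_cancel₀ hp.ne', Real.rpow_one]

theorem MemLp.exists_integral_mul_eq {p : ℝ} (hp : 1 < p) {f : α → ℝ}
    (hf : MemLp f (ENNReal.ofReal p) μ) :
    ∃ g : α → ℝ, MemLp g (ENNReal.ofReal (p / (p - 1))) μ ∧
      eLpNorm g (ENNReal.ofReal (p / (p - 1))) μ = eLpNorm f (ENNReal.ofReal p) μ ^ (p - 1) ∧
      ∫ x, f x * g x ∂μ = (eLpNorm f (ENNReal.ofReal p) μ).toReal ^ p := by
  set g : α → ℝ := fun x => f x * |f x| ^ (p - 2)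
  have hg_norm : ∀ x, ‖g x‖ = ‖f x‖ ^ (p - 1) := fun x => by
    simp only [g, Real.norm_eq_abs, abs_mul, Real.abs_rpow_of_nonneg (abs_nonneg _), abs_abs]
    rw [show p - 1 = p - 2 + 1 by ring, Real.rpow_add_one' (abs_nonneg _) (by linarith), mul_comm]
  have hfg : ∀ x, f x * g x = ‖f x‖ ^ p := fun x => by
    have hf2 : f x * g x = |f x| * (|f x| ^ (p - 2) * |f x|) := by
      simp only [g]; linear_combination (-(|f x| ^ (p - 2))) * abs_mul_abs_self (f x)
    rw [hf2, ← Real.rpow_add_one' (abs_nonneg _) (by linarith), show p - 2 + 1 = p - 1 by ring,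
      mul_comm, ← Real.rpow_add_one' (abs_nonneg _) (by linarith), sub_add_cancel,
      Real.norm_eq_abs]
  have hgm : AEStronglyMeasurable g μ :=
    (hf.1.aemeasurable.mul (hf.1.aemeasurable.abs.pow_const _)).aestronglyMeasurable
  have hpow := hf.norm_rpow_div (ENNReal.ofReal (p - 1))
  rw [ENNReal.toReal_ofReal (by linarith), ← ENNReal.ofReal_div_of_pos (by linarith)] at hpow
  refine ⟨g, hpow.of_le hgm (ae_of_all _ fun x => by rw [hg_norm]; exact Real.le_norm_self _),
    ?_, ?_⟩
  · rw [eLpNorm_congr_norm_ae (f := g) (g := fun x => ‖f x‖ ^ (p - 1))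
      (ae_of_all _ fun x => by rw [hg_norm]; exact (Real.norm_of_nonneg (by positivity)).symm),
      eLpNorm_norm_rpow _ (by linarith),
      ← ENNReal.ofReal_mul (by positivity), div_mul_cancel₀ _ (by linarith)]
  · simp_rw [hfg]
    exact integral_norm_rpow_eq_toReal_eLpNorm_rpow (by linarith) hf

theorem eLpNorm_le_of_forall_integral_mul_le {p : ℝ} (hp : 1 < p) {f : α → ℝ}
    (hf : MemLp f (ENNReal.ofReal p) μ) {ε : ℝ}
    (hε : ∀ η : Lp ℝ (ENNReal.ofReal (p / (p - 1))) μ, ‖η‖ ≤ 1 → |∫ x, f x * η x ∂μ| ≤ ε) :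
    eLpNorm f (ENNReal.ofReal p) μ ≤ ENNReal.ofReal ε := by
  set N := (eLpNorm f (ENNReal.ofReal p) μ).toReal
  rw [← ENNReal.ofReal_toReal hf.eLpNorm_ne_top]
  refine ENNReal.ofReal_le_ofReal ?_
  rcases ENNReal.toReal_nonneg.eq_or_lt with hN | hN
  · exact hN ▸ (abs_nonneg _).trans (hε 0 (by simp))
  obtain ⟨g, hg, hg_norm, hfg⟩ := hf.exists_integral_mul_eq hp
  have hc : 0 < N ^ (p - 1) := by positivity
  have hcg := hg.const_mul (N ^ (p - 1))⁻¹
  have hη : ‖hcg.toLp _‖ = 1 := by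
    rw [Lp.norm_toLp, show (fun x => (N ^ (p - 1))⁻¹ * g x) = (N ^ (p - 1))⁻¹ • g from rfl,
      eLpNorm_const_smul, hg_norm, ENNReal.toReal_mul, ← ENNReal.toReal_rpow, toReal_enorm,
      Real.norm_of_nonneg (by positivity), inv_mul_cancel₀ hc.ne']
  have hpair : ∫ x, f x * hcg.toLp _ x ∂μ = N := by
    rw [integral_congr_ae (hcg.coeFn_toLp.mono fun x hx => by rw [hx])]
    simp_rw [mul_left_comm (f _)]
    rw [integral_const_mul, hfg, Real.rpow_sub_one hN.ne', inv_div,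
      div_mul_cancel₀ _ (by positivity)]
  have hbound := hε _ hη.le
  rwa [hpair, abs_of_pos hN] at hbound

theorem tendsto_eLpNorm_of_forall_integral_mul_le {p : ℝ} (hp : 1 < p) {F : ℕ → α → ℝ}
    (hF : ∀ n, MemLp (F n) (ENNReal.ofReal p) μ)
    (hlim : ∀ ε : ℝ, 0 < ε → ∃ n₀ : ℕ, ∀ n ≥ n₀,
      ∀ η : Lp ℝ (ENNReal.ofReal (p / (p - 1))) μ, ‖η‖ ≤ 1 → |∫ x, F n x * η x ∂μ| ≤ ε) :
    Tendsto (fun n => eLpNorm (F n) (ENNReal.ofReal p) μ) atTop (𝓝 0) := by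
  refine ENNReal.tendsto_nhds_zero.2 fun ε hε => ?_
  obtain ⟨r, -, hr, hrε⟩ := ENNReal.lt_iff_exists_real_btwn.1 hε
  obtain ⟨n₀, hn₀⟩ := hlim r (ENNReal.ofReal_pos.1 hr)
  exact eventually_atTop.2 ⟨n₀, fun n hn =>
    (eLpNorm_le_of_forall_integral_mul_le hp (hF n) (hn₀ n hn)).trans hrε.le⟩

theorem abs_integral_mul_le_mul_norm {q : ℝ≥0∞} [Fact (1 ≤ q)] {F : α → ℝ} {ε : ℝ}
    (hF : ∀ η : Lp ℝ q μ, ‖η‖ ≤ 1 → |∫ x, F x * η x ∂μ| ≤ ε) (w : Lp ℝ q μ) :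
    |∫ x, F x * w x ∂μ| ≤ ε * ‖w‖ := by
  rcases eq_or_ne w 0 with rfl | hw
  · rw [integral_congr_ae ((Lp.coeFn_zero ℝ q μ).mono fun x hx => by
      rw [hx, Pi.zero_apply, mul_zero])]
    simp
  have hw' : 0 < ‖w‖ := norm_pos_iff.2 hw
  have hbound := hF (‖w‖⁻¹ • w) (by rw [norm_smul, norm_inv, norm_norm, inv_mul_cancel₀ hw'.ne'])
  rwa [integral_congr_ae ((Lp.coeFn_smul _ w).mono fun x hx => by
      rw [hx, Pi.smul_apply, smul_eq_mul, mul_left_comm]), integral_const_mul, abs_mul, abs_inv,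
    abs_norm, inv_mul_le_iff₀ hw', mul_comm] at hbound

section GrowthConditions

variable [IsFiniteMeasure μ] {p a : ℝ} {h : ℝ → ℝ}

theorem memLp_comp_of_abs_le (hp : 1 < p) (hcont : Continuous h)
    (hgrowth : ∀ t, |h t| ≤ a * (1 + |t| ^ (1 / (p - 1)))) {f : α → ℝ}
    (hf : MemLp f (ENNReal.ofReal (p / (p - 1))) μ) :
    MemLp (fun x => h (f x)) (ENNReal.ofReal p) μ := by
  have hp' : 0 < p - 1 := by linarith
  have hcomp := hf.comp_of_norm_le hcont (A := a) (B := a) (r := 1 / (p - 1)) (by positivity)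
    fun y => by simpa [mul_add, Real.norm_eq_abs] using hgrowth y
  rwa [← ENNReal.ofReal_div_of_pos (by positivity), div_div_div_cancel_right₀ hp'.ne',
    div_one] at hcomp

theorem integrable_primitive_comp (hp : 1 < p) (hcont : Continuous h) (ha : 0 ≤ a)
    (hgrowth : ∀ t, |h t| ≤ a * (1 + |t| ^ (1 / (p - 1)))) {f : α → ℝ}
    (hf : MemLp f (ENNReal.ofReal (p / (p - 1))) μ) :
    Integrable (fun x => ∫ s in (0 : ℝ)..f x, h s) μ := by
  have hp' : 0 < p - 1 := by linarith
  have hq : 1 ≤ p / (p - 1) := by rw [le_div_iff₀ hp']; linarith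
  have hrpow := hf.integrable_norm_rpow'
  rw [ENNReal.toReal_ofReal (by positivity)] at hrpow
  have hdom : Integrable (fun x => a * ‖f x‖ + a * ‖f x‖ ^ (p / (p - 1))) μ :=
    ((hf.integrable (ENNReal.one_le_ofReal.2 hq)).norm.const_mul a).add (hrpow.const_mul a)
  refine hdom.mono' ((intervalIntegral.continuous_primitive
    (fun _ _ => hcont.intervalIntegrable _ _) 0).comp_aestronglyMeasurable hf.1)
    (ae_of_all _ fun x => ?_)
  have hpow : |f x| ^ (1 / (p - 1)) * |f x| = |f x| ^ (p / (p - 1)) := by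
    rw [← Real.rpow_add_one' (abs_nonneg _) (by positivity)]
    congr 1
    field_simp
    ring
  calc ‖∫ s in (0 : ℝ)..f x, h s‖
      ≤ (a + a * |f x| ^ (1 / (p - 1))) * |f x| :=
        abs_integral_zero_le_of_abs_le ha (by positivity)
          (fun s => (hgrowth s).trans_eq (by ring)) _
    _ = a * ‖f x‖ + a * ‖f x‖ ^ (p / (p - 1)) := by
        rw [Real.norm_eq_abs, ← hpow]; ring

theorem mul_toReal_eLpNorm_rpow_sub_le (hp : 1 < p) (hcont : Continuous h) (ha : 0 ≤ a)
    (hgrowth : ∀ t, |h t| ≤ a * (1 + |t| ^ (1 / (p - 1)))) {C Ctil : ℝ}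
    (hlower : ∀ t, C * |t| ^ (p / (p - 1)) - Ctil ≤ (∫ s in (0 : ℝ)..t, h s) - 1 / 2 * h t * t)
    {f : α → ℝ} (hf : MemLp f (ENNReal.ofReal (p / (p - 1))) μ) :
    C * (eLpNorm f (ENNReal.ofReal (p / (p - 1))) μ).toReal ^ (p / (p - 1)) - Ctil * μ.real univ ≤
      ∫ x, (∫ s in (0 : ℝ)..f x, h s) ∂μ - 1 / 2 * ∫ x, h (f x) * f x ∂μ := by
  have : ENNReal.HolderConjugate (ENNReal.ofReal p) (ENNReal.ofReal (p / (p - 1))) :=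
    (Real.HolderConjugate.conjExponent hp).ennrealOfReal
  have hq : 0 < p / (p - 1) := div_pos (by linarith) (by linarith)
  have hH := integrable_primitive_comp hp hcont ha hgrowth hf
  have hhf : Integrable (fun x => h (f x) * f x) μ :=
    (memLp_comp_of_abs_le hp hcont hgrowth hf).integrable_mul hf
  have hrpow := hf.integrable_norm_rpow'
  rw [ENNReal.toReal_ofReal hq.le] at hrpow
  have hmono := integral_mono (f := fun x => C * ‖f x‖ ^ (p / (p - 1)) - Ctil)
    (g := fun x => (∫ s in (0 : ℝ)..f x, h s) - 1 / 2 * (h (f x) * f x))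
    ((hrpow.const_mul C).sub (integrable_const Ctil)) (hH.sub (hhf.const_mul (1 / 2))) fun x => by
      simpa [Real.norm_eq_abs, mul_assoc] using hlower (f x)
  rw [integral_sub (hrpow.const_mul C) (integrable_const Ctil), integral_const_mul, integral_const,
    smul_eq_mul, integral_sub hH (hhf.const_mul _), integral_const_mul,
    integral_norm_rpow_eq_toReal_eLpNorm_rpow hq hf] at hmono
  simpa [mul_comm] using hmono

theorem mul_norm_rpow_sub_le (hp : 1 < p) (hcont : Continuous h) (ha : 0 ≤ a)
    (hgrowth : ∀ t, |h t| ≤ a * (1 + |t| ^ (1 / (p - 1)))) {C Ctil : ℝ}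
    (hlower : ∀ t, C * |t| ^ (p / (p - 1)) - Ctil ≤ (∫ s in (0 : ℝ)..t, h s) - 1 / 2 * h t * t)
    (w : Lp ℝ (ENNReal.ofReal (p / (p - 1))) μ) {g : α → ℝ} (hg : MemLp g (ENNReal.ofReal p) μ) :
    C * ‖w‖ ^ (p / (p - 1)) - Ctil * μ.real univ ≤
      ((∫ x, (∫ s in (0 : ℝ)..w x, h s) ∂μ) - 1 / 2 * ∫ x, w x * g x ∂μ) -
        1 / 2 * ∫ x, (h (w x) - g x) * w x ∂μ := by
  have : ENNReal.HolderConjugate (ENNReal.ofReal p) (ENNReal.ofReal (p / (p - 1))) :=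
    (Real.HolderConjugate.conjExponent hp).ennrealOfReal
  have hhw : Integrable (fun x => h (w x) * w x) μ :=
    (memLp_comp_of_abs_le hp hcont hgrowth (Lp.memLp w)).integrable_mul (Lp.memLp w)
  have hgw : Integrable (fun x => g x * w x) μ := hg.integrable_mul (Lp.memLp w)
  have hcoer := mul_toReal_eLpNorm_rpow_sub_le hp hcont ha hgrowth hlower (Lp.memLp w)
  simp_rw [sub_mul]
  rw [integral_sub hhw hgw, Lp.norm_def]
  simp_rw [mul_comm (w _) (g _)]
  linarith

theorem exists_subseq_tendsto_of_tendsto_comp [Fact (1 ≤ ENNReal.ofReal (p / (p - 1)))]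
    (hp : 1 < p) (hmono : StrictMono h) (hsurj : Function.Surjective h) {M δ : ℝ} (hM : 0 < M)
    (hδ : 0 ≤ δ) (hlow : ∀ t, δ < |t| → M * |t| ^ (1 / (p - 1)) ≤ |h t|)
    {w : ℕ → Lp ℝ (ENNReal.ofReal (p / (p - 1))) μ} {v : Lp ℝ (ENNReal.ofReal p) μ}
    (hw : ∀ n, MemLp (fun x => h (w n x)) (ENNReal.ofReal p) μ)
    (hlim : Tendsto (fun n => eLpNorm ((fun x => h (w n x)) - ⇑v) (ENNReal.ofReal p) μ) atTop
      (𝓝 0)) :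
    ∃ ψ : ℕ → ℕ, StrictMono ψ ∧ ∃ u, Tendsto (fun n => w (ψ n)) atTop (𝓝 u) := by
  have hexp : ENNReal.ofReal p / ENNReal.ofReal (p - 1) = ENNReal.ofReal (p / (p - 1)) :=
    (ENNReal.ofReal_div_of_pos (by linarith)).symm
  let e := hmono.orderIsoOfSurjective h hsurj
  have he y : ‖e.symm y‖ ≤ δ + M⁻¹ ^ (p - 1) * ‖y‖ ^ (p - 1) := by
    have hbound := abs_le_add_rpow_of_le_abs hM hδ (by linarith) hlow (e.symm y)
    rw [show h (e.symm y) = y from e.apply_symm_apply y] at hbound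
    simpa only [Real.norm_eq_abs] using hbound
  obtain ⟨ψ, hψ, hconv⟩ := exists_subseq_tendsto_eLpNorm_comp e.symm.continuous (by linarith) he
    (ENNReal.one_le_ofReal.2 hp.le) (hexp ▸ Fact.out) (by simp) hw (Lp.memLp v) hlim
  have hu := (Lp.memLp v).comp_of_norm_le e.symm.continuous (by linarith) he
  rw [hexp] at hconv hu
  refine ⟨ψ, hψ, hu.toLp _, (Lp.tendsto_Lp_iff_tendsto_eLpNorm _ _ _).2 ?_⟩
  simpa [e] using hconv

end GrowthConditions

end MeasureTheory

theorem stmt_13_general (N : ℕ) (Ω : Set (Fin N → ℝ))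
    (hΩfin : volume Ω < ⊤)
    (p : ℝ) (hp : 2 < p)
    [Fact (1 ≤ ENNReal.ofReal (p / (p - 1)))] [Fact (1 ≤ ENNReal.ofReal p)]
    (T : Lp ℝ (ENNReal.ofReal (p / (p - 1))) (volume.restrict Ω) →L[ℝ] Lp ℝ (ENNReal.ofReal p) (volume.restrict Ω))
    (hTcompact : IsCompactOperator (⇑T))
    (h : ℝ → ℝ) (hcont : Continuous h)
    (hmono : StrictMono h) (hbij : Function.Bijective h)
    (a : ℝ) (ha : 0 < a) (hgrowth : ∀ t : ℝ, |h t| ≤ a * (1 + |t| ^ (1 / (p - 1))))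
    (M₁ δ : ℝ) (hM₁ : 0 < M₁) (hδ : 0 < δ)
    (hlow1 : ∀ t : ℝ, δ < |t| → M₁ * |t| ^ (1 / (p - 1)) ≤ |h t|)
    (Ψ : Lp ℝ (ENNReal.ofReal (p / (p - 1))) (volume.restrict Ω) → ℝ)
    (hΨ : ∀ w : Lp ℝ (ENNReal.ofReal (p / (p - 1))) (volume.restrict Ω),
      Ψ w = (∫ x, (∫ s in (0:ℝ)..(w x), h s) ∂(volume.restrict Ω)) - (1 / 2) * ∫ x, w x * T w x ∂(volume.restrict Ω))
    (C Ctil : ℝ) (hC : 0 < C)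
    (hlower : ∀ t : ℝ,
      C * |t| ^ (p / (p - 1)) - Ctil ≤ (∫ s in (0:ℝ)..t, h s) - (1 / 2) * h t * t)
    (w : ℕ → Lp ℝ (ENNReal.ofReal (p / (p - 1))) (volume.restrict Ω)) (c : ℝ)
    (hPS1 : Filter.Tendsto (fun n => Ψ (w n)) Filter.atTop (nhds c))
    (hPS2 : ∀ ε : ℝ, 0 < ε → ∃ n₀ : ℕ, ∀ n ≥ n₀,
      ∀ η : Lp ℝ (ENNReal.ofReal (p / (p - 1))) (volume.restrict Ω), ‖η‖ ≤ 1 →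
        |∫ x, (h (w n x) - T (w n) x) * η x ∂(volume.restrict Ω)| ≤ ε) :
    ∃ φ : ℕ → ℕ, StrictMono φ ∧
      ∃ wlim : Lp ℝ (ENNReal.ofReal (p / (p - 1))) (volume.restrict Ω),
        Filter.Tendsto (fun n => w (φ n)) Filter.atTop (nhds wlim) := by
  have hp1 : 1 < p := by linarith
  have : IsFiniteMeasure (volume.restrict Ω) := ⟨by rwa [Measure.restrict_apply_univ]⟩
  have hmemh n := memLp_comp_of_abs_le hp1 hcont hgrowth (Lp.memLp (w n))
  obtain ⟨R, hR⟩ : ∃ R, ∀ n, ‖w n‖ ≤ R := by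
    have hcoer n := mul_norm_rpow_sub_le hp1 hcont ha.le hgrowth hlower (w n) (Lp.memLp (T (w n)))
    simp only [← hΨ] at hcoer
    exact exists_forall_norm_le_of_coercive hC (by rw [lt_div_iff₀ (by linarith)]; linarith)
      hcoer hPS1.bddAbove_range (eventually_atTop.2 ((hPS2 1 one_pos).imp
        fun n₀ hn₀ n hn => by simpa using abs_integral_mul_le_mul_norm (hn₀ n hn) (w n)))
  obtain ⟨φ, hφ, v, hv⟩ := hTcompact.exists_subseq_tendsto hR
  have hresidual := tendsto_eLpNorm_of_forall_integral_mul_le hp1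
    (fun n => (hmemh n).sub (Lp.memLp (T (w n)))) hPS2
  have hhw := tendsto_eLpNorm_sub_of_tendsto_eLpNorm_sub Fact.out (fun n => (hmemh (φ n)).1)
    (fun n => Lp.aestronglyMeasurable (T (w (φ n)))) (Lp.aestronglyMeasurable v)
    (hresidual.comp hφ.tendsto_atTop) ((Lp.tendsto_Lp_iff_tendsto_eLpNorm' _ _).1 hv)
  obtain ⟨ψ, hψ, u, hu⟩ := exists_subseq_tendsto_of_tendsto_comp hp1 hmono hbij.2 hM₁ hδ.le hlow1
    (fun n => hmemh (φ n)) hhw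
  exact ⟨φ ∘ ψ, hφ.comp hψ, u, hu⟩

theorem stmt_13 (N : ℕ) (Ω : Set (Fin N → ℝ)) (hΩmeas : MeasurableSet Ω)
    (hΩpos : 0 < volume Ω) (hΩfin : volume Ω < ⊤)
    (p q : ℝ) (hp : 2 < p) (hq2 : 2 < q) (hqp : q ≤ p)
    [Fact (1 ≤ ENNReal.ofReal (p / (p - 1)))] [Fact (1 ≤ ENNReal.ofReal p)]
    (T : Lp ℝ (ENNReal.ofReal (p / (p - 1))) (volume.restrict Ω) →L[ℝ] Lp ℝ (ENNReal.ofReal p) (volume.restrict Ω))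
    (hTcompact : IsCompactOperator (⇑T))
    (h : ℝ → ℝ) (hcont : Continuous h) (hodd : ∀ t : ℝ, h (-t) = - h t)
    (hmono : StrictMono h) (hbij : Function.Bijective h)
    (a : ℝ) (ha : 0 < a) (hgrowth : ∀ t : ℝ, |h t| ≤ a * (1 + |t| ^ (1 / (p - 1))))
    (M₁ M₂ δ : ℝ) (hM₁ : 0 < M₁) (hM₂ : 0 < M₂) (hδ : 0 < δ)
    (hlow1 : ∀ t : ℝ, δ < |t| → M₁ * |t| ^ (1 / (p - 1)) ≤ |h t|)
    (hlow2 : ∀ t : ℝ, |t| ≤ δ → M₂ * |t| ^ (1 / (q - 1)) ≤ |h t|)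
    (Ψ : Lp ℝ (ENNReal.ofReal (p / (p - 1))) (volume.restrict Ω) → ℝ)
    (hΨ : ∀ w : Lp ℝ (ENNReal.ofReal (p / (p - 1))) (volume.restrict Ω),
      Ψ w = (∫ x, (∫ s in (0:ℝ)..(w x), h s) ∂(volume.restrict Ω)) - (1 / 2) * ∫ x, w x * T w x ∂(volume.restrict Ω))
    (C Ctil : ℝ) (hC : 0 < C) (hCtil : 0 ≤ Ctil)
    (hlower : ∀ t : ℝ,
      C * |t| ^ (p / (p - 1)) - Ctil ≤ (∫ s in (0:ℝ)..t, h s) - (1 / 2) * h t * t)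
    (w : ℕ → Lp ℝ (ENNReal.ofReal (p / (p - 1))) (volume.restrict Ω)) (c : ℝ)
    (hPS1 : Filter.Tendsto (fun n => Ψ (w n)) Filter.atTop (nhds c))
    (hPS2 : ∀ ε : ℝ, 0 < ε → ∃ n₀ : ℕ, ∀ n ≥ n₀,
      ∀ η : Lp ℝ (ENNReal.ofReal (p / (p - 1))) (volume.restrict Ω), ‖η‖ ≤ 1 →
        |∫ x, (h (w n x) - T (w n) x) * η x ∂(volume.restrict Ω)| ≤ ε) :
    ∃ φ : ℕ → ℕ, StrictMono φ ∧
      ∃ wlim : Lp ℝ (ENNReal.ofReal (p / (p - 1))) (volume.restrict Ω),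
        Filter.Tendsto (fun n => w (φ n)) Filter.atTop (nhds wlim) :=
  stmt_13_general N Ω hΩfin p hp T hTcompact h hcont hmono hbij a ha hgrowth M₁ δ hM₁ hδ hlow1 Ψ hΨ
    C Ctil hC hlower w c hPS1 hPS2
end

section
/- Let Ω ⊂ ℝ^N be a measurable set of finite positive Lebesgue measure, f : ℝ → ℝ satisfy (f1)–(f5), h = f⁻¹, p' = p/(p−1), and let T : L^{p'}(Ω) → L^{p}(Ω) be a bounded linear operator that is symmetric, strictly positive, and positivity-improving. Define M = {w ∈ L^{p'}(Ω) : w⁺ ≠ 0, w⁻ ≠ 0, ∫_Ω h(w) w⁺ dx = ∫_Ω w⁺·Tw dx, ∫_Ω h(w) w⁻ dx = ∫_Ω w⁻·Tw dx}. If v ∈ L^{p'}(Ω) satisfies v⁺ ≠ 0, v⁻ ≠ 0, ∫_Ω h(v) v⁺ dx − ∫_Ω v⁺·Tv dx ≤ 0 and ∫_Ω h(v) v⁻ dx − ∫_Ω v⁻·Tv dx ≤ 0, then there exist t, s ∈ (0, 1] such that t v⁺ + s v⁻ ∈ M. -/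
/-!
Write `u = v ⊔ 0`, `z = v ⊓ 0`, `A t = ∫ h (t u) u`, `B s = ∫ h (s z) z` and
`α = ∫ u T u`, `β = ∫ u T z = ∫ z T u`, `γ = ∫ z T z`. As `t u` and `s z` have disjoint supports,
the two Nehari conditions for `t u + s z` become the scalar system `A t = t α + s β`,
`B s = s γ + t β`, and the hypotheses on `v` say `A 1 ≤ α + β` and `B 1 ≤ γ + β`.
Positivity improvement gives `β < 0`; by (f5) the quotient `A t / t` is nonincreasing, and by (f4)
it tends to `+∞` as `t → 0⁺`. Hence the first equation, solved as `s = σ t = (A t - t α) / β`,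
has `σ` negative for small `t` and `σ 1 ≥ 1`, and there is an interval `[a, b]` mapped by `σ`
into `[0, 1]` with `σ a = 0`, `σ b = 1`. The function `B (σ t) - σ t γ - t β` is positive at `a`
and nonpositive at `b`, so it vanishes somewhere in between. The growth condition (f3) makes
`|h σ|` grow at most like `|σ| ^ (1 / (p - 1))`, which keeps `A` and `B` continuous on `L^{p'}`.
-/

open Set Filter Topology MeasureTheory
open scoped ENNReal

theorem exists_Icc_mapsTo_div_of_antitoneOn {A : ℝ → ℝ} {α β t₁ : ℝ} (hβ : β < 0)
    (ht₁ : t₁ ∈ Ioo 0 1) (hA : ContinuousOn A (Icc t₁ 1))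
    (hA_anti : AntitoneOn (fun t => A t / t) (Ioi 0))
    (hAt₁ : α < A t₁ / t₁) (hA1 : A 1 ≤ α + β) :
    ∃ a b, t₁ ≤ a ∧ a ≤ b ∧ b ≤ 1 ∧ (A a - a * α) / β = 0 ∧ (A b - b * α) / β = 1 ∧
      MapsTo (fun t => (A t - t * α) / β) (Icc a b) (Icc 0 1) := by
  obtain ⟨ht₁0, ht₁1⟩ := ht₁
  set σ : ℝ → ℝ := fun t => (A t - t * α) / β with hσ
  -- On `[a, b]` both factors `t` and `α - A t / t` are nonnegative and nondecreasing.
  have hσ_ratio : ∀ t, 0 < t → σ t = t * (α - A t / t) / -β := fun t ht => by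
    simp only [hσ]; field_simp; ring
  have hσ_cont : ContinuousOn σ (Icc t₁ 1) :=
    (hA.sub (continuousOn_id.mul continuousOn_const)).div_const β
  have hσt₁ : σ t₁ < 0 := by
    rw [hσ_ratio t₁ ht₁0]
    exact div_neg_of_neg_of_pos (mul_neg_of_pos_of_neg ht₁0 (by linarith)) (by linarith)
  have hσ1 : 1 ≤ σ 1 := by
    rw [hσ, le_div_iff_of_neg hβ]; linarith
  obtain ⟨a, ha, hσa⟩ := intermediate_value_Icc ht₁1.le hσ_cont ⟨hσt₁.le, by linarith⟩
  obtain ⟨b, hb, hσb⟩ := intermediate_value_Icc ha.2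
    (hσ_cont.mono (Icc_subset_Icc_left ha.1)) ⟨hσa ▸ zero_le_one, hσ1⟩
  have ha0 : 0 < a := ht₁0.trans_le ha.1
  have hAa : A a / a = α := by
    have : A a - a * α = 0 := by simpa [hσ, hβ.ne] using hσa
    field_simp; linarith
  refine ⟨a, b, ha.1, hb.1, hb.2, hσa, hσb, fun t ht => ?_⟩
  have ht0 : 0 < t := ha0.trans_le ht.1
  have hlow : 0 ≤ α - A t / t := by
    linarith [hA_anti (mem_Ioi.2 ha0) (mem_Ioi.2 ht0) ht.1]
  have hup : α - A t / t ≤ α - A b / b := by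
    linarith [hA_anti (mem_Ioi.2 ht0) (mem_Ioi.2 (ht0.trans_le ht.2)) ht.2]
  show 0 ≤ σ t ∧ σ t ≤ 1
  rw [hσ_ratio t ht0]
  refine ⟨div_nonneg (mul_nonneg ht0.le hlow) (by linarith), ?_⟩
  rw [← hσb, hσ_ratio b (ht0.trans_le ht.2)]
  exact div_le_div_of_nonneg_right (mul_le_mul ht.2 hup hlow (by linarith [ht.2])) (by linarith)

theorem exists_mem_Ioc_eq_of_continuousOn {A B : ℝ → ℝ} {α β γ t₁ : ℝ} (hβ : β < 0)
    (ht₁ : t₁ ∈ Ioo 0 1) (hA : ContinuousOn A (Icc t₁ 1)) (hB : ContinuousOn B (Icc 0 1))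
    (hA_anti : AntitoneOn (fun t => A t / t) (Ioi 0)) (hB0 : B 0 = 0)
    (hAt₁ : α < A t₁ / t₁) (hA1 : A 1 ≤ α + β) (hB1 : B 1 ≤ γ + β) :
    ∃ t ∈ Ioc 0 1, ∃ s ∈ Ioc 0 1, A t = t * α + s * β ∧ B s = s * γ + t * β := by
  obtain ⟨a, b, ht₁a, hab, hb1, hσa, hσb, hσ_maps⟩ :=
    exists_Icc_mapsTo_div_of_antitoneOn hβ ht₁ hA hA_anti hAt₁ hA1
  -- `σ t` solves the first equation for `s`; the second one is then solved along `[a, b]`.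
  set σ : ℝ → ℝ := fun t => (A t - t * α) / β with hσ
  replace hσa : σ a = 0 := hσa
  replace hσb : σ b = 1 := hσb
  have hσ_cont : ContinuousOn σ (Icc a b) :=
    ((hA.mono (Icc_subset_Icc ht₁a hb1)).sub
      (continuousOn_id.mul continuousOn_const)).div_const β
  set K : ℝ → ℝ := fun t => B (σ t) - σ t * γ - t * β with hK
  have hK_cont : ContinuousOn K (Icc a b) :=
    ((hB.comp hσ_cont hσ_maps).sub (hσ_cont.mul continuousOn_const)).sub
      (continuousOn_id.mul continuousOn_const)
  have hKa : 0 < K a := by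
    simp only [hK, hσa, hB0]; nlinarith [ht₁.1]
  have hKb : K b ≤ 0 := by
    simp only [hK, hσb]; nlinarith
  obtain ⟨t, ht, hKt⟩ := intermediate_value_Icc' hab hK_cont ⟨hKb, hKa.le⟩
  have ht0 : 0 < t := ht₁.1.trans_le (ht₁a.trans ht.1)
  have hσt0 : σ t ≠ 0 := by
    intro h0
    simp only [hK, h0, hB0] at hKt
    nlinarith
  refine ⟨t, ⟨ht0, ht.2.trans hb1⟩, σ t, ⟨(hσ_maps ht).1.lt_of_ne' hσt0, (hσ_maps ht).2⟩, ?_, ?_⟩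
  · simp only [hσ]; field_simp [hβ.ne]; ring
  · simp only [hK] at hKt; linarith

section Inverse

variable {f h : ℝ → ℝ}

theorem tendsto_div_self_nhdsGT_zero_of_tendsto_div_rpow {b₀ q : ℝ} (hb₀ : 0 < b₀) (hq : 2 < q)
    (hf : Tendsto (fun t => f t / t ^ (q - 1)) (𝓝[>] 0) (𝓝 b₀)) :
    Tendsto (fun t => f t / t) (𝓝[>] 0) (𝓝[>] 0) := by
  have hpow : Tendsto (fun t : ℝ => t ^ (q - 2)) (𝓝[>] 0) (𝓝[>] 0) := by
    refine tendsto_nhdsWithin_of_tendsto_nhds_of_eventually_within _ ?_ ?_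
    · simpa [Real.zero_rpow (by linarith : q - 2 ≠ 0)] using
        ((Real.continuousAt_rpow_const 0 (q - 2) (Or.inr (by linarith))).tendsto).mono_left
          nhdsWithin_le_nhds
    · filter_upwards [self_mem_nhdsWithin] with t ht using Real.rpow_pos_of_pos ht _
  have hprod := (tendsto_nhdsWithin_iff.1 hpow).1
  refine tendsto_nhdsWithin_iff.2 ⟨?_, ?_⟩
  · have hlim : Tendsto (fun t => f t / t ^ (q - 1) * t ^ (q - 2)) (𝓝[>] 0) (𝓝 0) := by
      simpa using hf.mul hprod
    refine hlim.congr' ?_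
    filter_upwards [self_mem_nhdsWithin] with t (ht : 0 < t)
    rw [div_mul_eq_mul_div, mul_div_assoc, ← Real.rpow_sub ht]
    norm_num [Real.rpow_neg_one, div_eq_mul_inv]
  · filter_upwards [self_mem_nhdsWithin, hf.eventually (eventually_gt_nhds hb₀)]
      with t (ht : 0 < t) hft
    have : 0 < f t := by
      simpa [div_pos_iff, Real.rpow_pos_of_pos ht, (Real.rpow_pos_of_pos ht _).not_gt] using hft
    exact div_pos this ht

theorem Continuous.strictMono_of_inj_of_lt (hf : Continuous f) (hinj : Function.Injective f)
    {a b : ℝ} (hab : a < b) (hfab : f a < f b) : StrictMono f :=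
  (hf.strictMono_of_inj hinj).resolve_right fun hanti => (hanti hab).not_gt hfab

theorem antitoneOn_div_self_of_rightInverse (hf : MonotoneOn (fun t => f t / t) (Ioi 0))
    (hh : StrictMono h) (hh0 : h 0 = 0) (hfh : Function.RightInverse h f) :
    AntitoneOn (fun σ => h σ / σ) (Ioi 0) := by
  intro σ₁ (hσ₁ : 0 < σ₁) σ₂ (hσ₂ : 0 < σ₂) hσ
  have h₁ : 0 < h σ₁ := hh0 ▸ hh hσ₁
  have h₂ : 0 < h σ₂ := hh0 ▸ hh hσ₂
  have := hf h₁ h₂ (hh.monotone hσ)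
  simp only [hfh σ₁, hfh σ₂] at this
  rw [div_le_div_iff₀ h₁ h₂] at this
  rw [div_le_div_iff₀ hσ₂ hσ₁]
  linarith

theorem tendsto_div_self_atTop_of_rightInverse
    (hf : Tendsto (fun t => f t / t) (𝓝[>] 0) (𝓝[>] 0))
    (hh : StrictMono h) (hhc : Continuous h) (hh0 : h 0 = 0) (hfh : Function.RightInverse h f) :
    Tendsto (fun σ => h σ / σ) (𝓝[>] 0) atTop := by
  have hh_gt : Tendsto h (𝓝[>] 0) (𝓝[>] 0) := by
    refine tendsto_nhdsWithin_of_tendsto_nhds_of_eventually_within _ ?_ ?_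
    · simpa [hh0] using hhc.continuousAt.tendsto.mono_left (nhdsWithin_le_nhds (a := (0:ℝ)))
    · filter_upwards [self_mem_nhdsWithin] with σ (hσ : 0 < σ) using hh0 ▸ hh hσ
  refine (tendsto_inv_nhdsGT_zero.comp (hf.comp hh_gt)).congr fun σ => ?_
  simp [hfh σ]

theorem exists_abs_le_add_mul_abs_rpow {c₀ p : ℝ} (hc₀ : 0 < c₀) (hp : 1 < p)
    (hf : Tendsto (fun t => f t / t ^ (p - 1)) atTop (𝓝 c₀))
    (hh : Monotone h) (hh0 : h 0 = 0) (hodd : ∀ σ, h (-σ) = -h σ)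
    (hfh : Function.RightInverse h f) :
    ∃ C₁, ∃ C₂ ≥ 0, ∀ σ, |h σ| ≤ C₁ + C₂ * |σ| ^ (p - 1)⁻¹ := by
  obtain ⟨T₀, hT₀⟩ := eventually_atTop.1 (hf.eventually (eventually_gt_nhds (half_lt_self hc₀)))
  have hp1 : 0 < p - 1 := by linarith
  refine ⟨max T₀ 0, (2 / c₀) ^ (p - 1)⁻¹, by positivity, fun σ => ?_⟩
  have habs : |h σ| = h |σ| := by
    rcases le_total 0 σ with hσ | hσ
    · rw [abs_of_nonneg hσ, abs_of_nonneg (hh0 ▸ hh hσ)]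
    · rw [abs_of_nonpos hσ, abs_of_nonpos (hh0 ▸ hh hσ), hodd]
  rw [habs]
  by_cases hT : h |σ| ≤ max T₀ 0
  · nlinarith [Real.rpow_nonneg (abs_nonneg σ) (p - 1)⁻¹,
      Real.rpow_nonneg (by positivity : (0:ℝ) ≤ 2 / c₀) (p - 1)⁻¹]
  push Not at hT
  have hlow := hT₀ _ ((le_max_left _ _).trans hT.le)
  have ht : 0 < h |σ| := (le_max_right _ _).trans_lt hT
  rw [hfh, lt_div_iff₀ (Real.rpow_pos_of_pos ht _)] at hlow
  have : h |σ| ≤ (2 / c₀ * |σ|) ^ (p - 1)⁻¹ := by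
    rw [Real.le_rpow_inv_iff_of_pos ht.le (by positivity) hp1]
    rw [div_mul_eq_mul_div, le_div_iff₀ hc₀]
    linarith
  rw [Real.mul_rpow (by positivity) (abs_nonneg σ)] at this
  linarith [le_max_right T₀ 0]

end Inverse

section Nemytskii

variable {X : Type*} [MeasurableSpace X] {μ : Measure X} {h : ℝ → ℝ} {g : X → ℝ}

theorem abs_comp_mul_mul_le {C₁ C₂ r R t a : ℝ} (hC₂ : 0 ≤ C₂) (hr : 0 ≤ r)
    (hgrowth : ∀ σ, |h σ| ≤ C₁ + C₂ * |σ| ^ r) (ht : |t| ≤ R) :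
    |h (t * a) * a| ≤ C₁ * |a| + C₂ * R ^ r * |a| ^ (r + 1) := by
  have hR : |t| ^ r ≤ R ^ r := Real.rpow_le_rpow (abs_nonneg t) ht hr
  rw [abs_mul, Real.rpow_add_one' (abs_nonneg a) (by linarith)]
  calc |h (t * a)| * |a| ≤ (C₁ + C₂ * (|t| ^ r * |a| ^ r)) * |a| := by
        rw [← Real.mul_rpow (abs_nonneg t) (abs_nonneg a), ← abs_mul t a]
        exact mul_le_mul_of_nonneg_right (hgrowth _) (abs_nonneg a)
    _ ≤ C₁ * |a| + C₂ * R ^ r * (|a| ^ r * |a|) := by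
      have := mul_le_mul_of_nonneg_right hR
        (mul_nonneg hC₂ (mul_nonneg (Real.rpow_nonneg (abs_nonneg a) r) (abs_nonneg a)))
      nlinarith

theorem antitoneOn_comp_mul_mul_div (hratio : AntitoneOn (fun σ => h σ / σ) (Ioi 0))
    {a : ℝ} (ha : 0 ≤ a) : AntitoneOn (fun t => h (t * a) * a / t) (Ioi 0) := by
  rcases ha.eq_or_lt with rfl | ha
  · intro _ _ _ _ _; simp
  intro t₁ (ht₁ : 0 < t₁) t₂ (ht₂ : 0 < t₂) ht
  show h (t₂ * a) * a / t₂ ≤ h (t₁ * a) * a / t₁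
  have key : ∀ t, 0 < t → h (t * a) * a / t = h (t * a) / (t * a) * a ^ 2 := fun t ht => by
    field_simp
  rw [key t₁ ht₁, key t₂ ht₂]
  exact mul_le_mul_of_nonneg_right
    (hratio (mul_pos ht₁ ha) (mul_pos ht₂ ha) (mul_le_mul_of_nonneg_right ht ha.le)) (sq_nonneg a)

theorem antitoneOn_integral_comp_mul_mul_div (hratio : AntitoneOn (fun σ => h σ / σ) (Ioi 0))
    (hg0 : 0 ≤ᵐ[μ] g) (hint : ∀ t, Integrable (fun x => h (t * g x) * g x) μ) :
    AntitoneOn (fun t => (∫ x, h (t * g x) * g x ∂μ) / t) (Ioi 0) := by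
  intro t₁ ht₁ t₂ ht₂ ht
  simp only [← integral_div]
  refine integral_mono_ae ((hint t₂).div_const t₂) ((hint t₁).div_const t₁) ?_
  filter_upwards [hg0] with x hx using antitoneOn_comp_mul_mul_div hratio hx ht₁ ht₂ ht

theorem exists_pos_measure_le_of_not_ae_eq_zero (hg0 : 0 ≤ᵐ[μ] g) (hg : ¬ g =ᵐ[μ] 0) :
    ∃ c > 0, 0 < μ {x | c ≤ g x} := by
  by_contra! hnull
  refine hg ?_
  have hlt : ∀ᵐ x ∂μ, ∀ n : ℕ, g x < 1 / (n + 1) := ae_all_iff.2 fun n => by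
    have hn := nonpos_iff_eq_zero.1 (hnull (1 / (n + 1)) (by positivity))
    filter_upwards [measure_eq_zero_iff_ae_notMem.1 hn] with x hx using lt_of_not_ge hx
  filter_upwards [hg0, hlt] with x hx0 hx
  refine le_antisymm (not_lt.1 fun hpos => ?_) hx0
  obtain ⟨n, hn⟩ := exists_nat_one_div_lt hpos
  exact (hx n).not_gt hn

variable [IsFiniteMeasure μ] {r : ℝ}

theorem integrable_add_mul_abs_rpow (hr : 0 ≤ r) (hg : MemLp g (ENNReal.ofReal (r + 1)) μ)
    (C₁ C₂ : ℝ) : Integrable (fun x => C₁ * |g x| + C₂ * |g x| ^ (r + 1)) μ := by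
  have hg1 : Integrable g μ := hg.integrable (by simp [hr])
  have hgr := hg.integrable_norm_rpow (by simp; linarith) ENNReal.ofReal_ne_top
  rw [ENNReal.toReal_ofReal (by linarith)] at hgr
  exact (hg1.abs.const_mul C₁).add (hgr.const_mul C₂)

theorem tendsto_integral_comp_mul_mul_div_atTop (hh : Monotone h)
    (hh0 : h 0 = 0) (htend : Tendsto (fun σ => h σ / σ) (𝓝[>] 0) atTop)
    (hgm : AEMeasurable g μ) (hg0 : 0 ≤ᵐ[μ] g) (hg : ¬ g =ᵐ[μ] 0)
    (hint : ∀ t, Integrable (fun x => h (t * g x) * g x) μ) :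
    Tendsto (fun t => (∫ x, h (t * g x) * g x ∂μ) / t) (𝓝[>] 0) atTop := by
  obtain ⟨c, hc, hE⟩ := exists_pos_measure_le_of_not_ae_eq_zero hg0 hg
  set E := {x | c ≤ g x}
  have hEm : NullMeasurableSet E μ := hgm.nullMeasurable measurableSet_Ici
  have hEr : 0 < μ.real E := ENNReal.toReal_pos hE.ne' (measure_ne_top μ E)
  have hlow : ∀ t, 0 < t → μ.real E * c ^ 2 * (h (t * c) / (t * c)) ≤
      (∫ x, h (t * g x) * g x ∂μ) / t := by
    intro t ht
    have hind : ∫ x, E.indicator (fun _ => h (t * c) * c) x ∂μ ≤ ∫ x, h (t * g x) * g x ∂μ := by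
      refine integral_mono_ae ((integrable_const _).indicator₀ hEm) (hint t) ?_
      filter_upwards [hg0] with x hx
      by_cases hxE : x ∈ E
      · rw [indicator_of_mem hxE]
        exact mul_le_mul (hh (mul_le_mul_of_nonneg_left hxE ht.le)) hxE hc.le
          (hh0 ▸ hh (mul_nonneg ht.le hx))
      · rw [indicator_of_notMem hxE]
        exact mul_nonneg (hh0 ▸ hh (mul_nonneg ht.le hx)) hx
    rw [integral_indicator₀ hEm, setIntegral_const, smul_eq_mul] at hind
    rw [le_div_iff₀ ht]
    refine le_of_eq_of_le ?_ hind
    field_simp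
  have htc : Tendsto (fun t => t * c) (𝓝[>] 0) (𝓝[>] 0) := by
    refine tendsto_nhdsWithin_of_tendsto_nhds_of_eventually_within _ ?_ ?_
    · simpa using ((continuous_mul_const c).tendsto 0).mono_left nhdsWithin_le_nhds
    · filter_upwards [self_mem_nhdsWithin] with t (ht : 0 < t) using mul_pos ht hc
  refine tendsto_atTop_mono' _ ?_ ((htend.comp htc).const_mul_atTop (mul_pos hEr (pow_pos hc 2)))
  filter_upwards [self_mem_nhdsWithin] with t ht using hlow t ht

variable {C₁ C₂ : ℝ}

theorem integrable_comp_mul_mul (hh : Continuous h) (hC₂ : 0 ≤ C₂) (hr : 0 ≤ r)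
    (hgrowth : ∀ σ, |h σ| ≤ C₁ + C₂ * |σ| ^ r) (hg : MemLp g (ENNReal.ofReal (r + 1)) μ)
    (t : ℝ) : Integrable (fun x => h (t * g x) * g x) μ :=
  (integrable_add_mul_abs_rpow hr hg C₁ (C₂ * |t| ^ r)).mono'
    ((hh.comp_aestronglyMeasurable (hg.1.const_mul t)).mul hg.1)
    (Eventually.of_forall fun _ => abs_comp_mul_mul_le hC₂ hr hgrowth le_rfl)

theorem continuous_integral_comp_mul_mul (hh : Continuous h) (hC₂ : 0 ≤ C₂) (hr : 0 ≤ r)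
    (hgrowth : ∀ σ, |h σ| ≤ C₁ + C₂ * |σ| ^ r) (hg : MemLp g (ENNReal.ofReal (r + 1)) μ) :
    Continuous fun t => ∫ x, h (t * g x) * g x ∂μ := by
  refine continuous_iff_continuousAt.2 fun t₀ => continuousAt_of_dominated
    (Eventually.of_forall fun t =>
      (integrable_comp_mul_mul hh hC₂ hr hgrowth hg t).aestronglyMeasurable) ?_
    (integrable_add_mul_abs_rpow hr hg C₁ (C₂ * (|t₀| + 1) ^ r))
    (Eventually.of_forall fun x => by fun_prop)
  filter_upwards [(continuous_abs.tendsto t₀).eventually (eventually_lt_nhds (lt_add_one |t₀|))]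
    with t ht
  exact Eventually.of_forall fun x => abs_comp_mul_mul_le hC₂ hr hgrowth ht.le

end Nemytskii

theorem max_mul_max_add_mul_min_zero {t s : ℝ} (ht : 0 ≤ t) (hs : 0 ≤ s) (a : ℝ) :
    max (t * max a 0 + s * min a 0) 0 = t * max a 0 := by
  rcases le_total a 0 with ha | ha
  · simp [ha, mul_nonpos_of_nonneg_of_nonpos hs ha]
  · simp [ha, mul_nonneg ht ha]

theorem min_mul_max_add_mul_min_zero {t s : ℝ} (ht : 0 ≤ t) (hs : 0 ≤ s) (a : ℝ) :
    min (t * max a 0 + s * min a 0) 0 = s * min a 0 := by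
  rcases le_total a 0 with ha | ha
  · simp [ha, mul_nonpos_of_nonneg_of_nonpos hs ha]
  · simp [ha, mul_nonneg ht ha]

theorem integral_mul_pos_of_ae_pos {X : Type*} [MeasurableSpace X] {μ : Measure X}
    {u k : X → ℝ} (hu0 : 0 ≤ᵐ[μ] u) (hu : ¬ u =ᵐ[μ] 0) (hk : ∀ᵐ x ∂μ, 0 < k x)
    (hint : Integrable (fun x => u x * k x) μ) : 0 < ∫ x, u x * k x ∂μ := by
  refine (integral_pos_iff_support_of_nonneg_ae ?_ hint).2 ?_
  · filter_upwards [hu0, hk] with x hx hkx using mul_nonneg hx hkx.le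
  · refine (pos_iff_ne_zero.2 fun h0 => hu h0).trans_le
      (measure_mono_ae ?_)
    filter_upwards [hk] with x hkx hx using mul_ne_zero hx hkx.ne'

namespace MeasureTheory.Lp

variable {X : Type*} [MeasurableSpace X] {μ : Measure X}

section Lattice

variable {q : ℝ≥0∞} (v : Lp ℝ q μ)

theorem coeFn_sup_zero : ⇑(v ⊔ 0) =ᵐ[μ] fun x => max (v x) 0 := by
  filter_upwards [coeFn_sup v 0, coeFn_zero ℝ q μ] with x h1 h2
  rw [h1, Pi.sup_apply, h2, Pi.zero_apply]

theorem coeFn_inf_zero : ⇑(v ⊓ 0) =ᵐ[μ] fun x => min (v x) 0 := by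
  filter_upwards [coeFn_inf v 0, coeFn_zero ℝ q μ] with x h1 h2
  rw [h1, Pi.inf_apply, h2, Pi.zero_apply]

theorem coeFn_smul_sup_add_smul_inf (t s : ℝ) :
    ⇑(t • (v ⊔ 0) + s • (v ⊓ 0)) =ᵐ[μ] fun x => t * max (v x) 0 + s * min (v x) 0 := by
  filter_upwards [coeFn_add (t • (v ⊔ 0)) (s • (v ⊓ 0)), coeFn_smul t (v ⊔ 0),
    coeFn_smul s (v ⊓ 0), coeFn_sup_zero v, coeFn_inf_zero v] with x h1 h2 h3 h4 h5
  rw [h1, Pi.add_apply, h2, h3, Pi.smul_apply, Pi.smul_apply, h4, h5, smul_eq_mul, smul_eq_mul]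

theorem one_smul_sup_add_one_smul_inf : (1 : ℝ) • (v ⊔ 0) + (1 : ℝ) • (v ⊓ 0) = v := by
  ext1
  filter_upwards [coeFn_smul_sup_add_smul_inf v 1 1] with x hx
  rw [hx, one_mul, one_mul, max_add_min, add_zero]

variable {v} {t s : ℝ}

theorem smul_sup_add_smul_inf_sup_zero (ht : 0 ≤ t) (hs : 0 ≤ s) :
    (t • (v ⊔ 0) + s • (v ⊓ 0)) ⊔ 0 = t • (v ⊔ 0) := by
  ext1
  filter_upwards [coeFn_sup_zero (t • (v ⊔ 0) + s • (v ⊓ 0)),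
    coeFn_smul_sup_add_smul_inf v t s, coeFn_smul t (v ⊔ 0), coeFn_sup_zero v]
    with x h1 h2 h3 h4
  rw [h1, h2, h3, Pi.smul_apply, h4, smul_eq_mul, max_mul_max_add_mul_min_zero ht hs]

theorem smul_sup_add_smul_inf_inf_zero (ht : 0 ≤ t) (hs : 0 ≤ s) :
    (t • (v ⊔ 0) + s • (v ⊓ 0)) ⊓ 0 = s • (v ⊓ 0) := by
  ext1
  filter_upwards [coeFn_inf_zero (t • (v ⊔ 0) + s • (v ⊓ 0)),
    coeFn_smul_sup_add_smul_inf v t s, coeFn_smul s (v ⊓ 0), coeFn_inf_zero v]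
    with x h1 h2 h3 h4
  rw [h1, h2, h3, Pi.smul_apply, h4, smul_eq_mul, min_mul_max_add_mul_min_zero ht hs]

theorem integral_comp_mul_sup_zero (h : ℝ → ℝ) (ht : 0 ≤ t) (hs : 0 ≤ s) :
    ∫ x, h ((t • (v ⊔ 0) + s • (v ⊓ 0)) x) * ((t • (v ⊔ 0) + s • (v ⊓ 0)) ⊔ 0) x ∂μ =
      t * ∫ x, h (t * (v ⊔ 0) x) * (v ⊔ 0) x ∂μ := by
  rw [smul_sup_add_smul_inf_sup_zero ht hs, ← integral_const_mul]
  refine integral_congr_ae ?_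
  filter_upwards [coeFn_smul_sup_add_smul_inf v t s, coeFn_smul t (v ⊔ 0), coeFn_sup_zero v]
    with x h1 h2 h3
  rw [h1, h2, Pi.smul_apply, smul_eq_mul, h3]
  rcases le_total (v x) 0 with ha | ha <;> simp [ha, mul_left_comm]

theorem integral_comp_mul_inf_zero (h : ℝ → ℝ) (ht : 0 ≤ t) (hs : 0 ≤ s) :
    ∫ x, h ((t • (v ⊔ 0) + s • (v ⊓ 0)) x) * ((t • (v ⊔ 0) + s • (v ⊓ 0)) ⊓ 0) x ∂μ =
      s * ∫ x, h (s * (v ⊓ 0) x) * (v ⊓ 0) x ∂μ := by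
  rw [smul_sup_add_smul_inf_inf_zero ht hs, ← integral_const_mul]
  refine integral_congr_ae ?_
  filter_upwards [coeFn_smul_sup_add_smul_inf v t s, coeFn_smul s (v ⊓ 0), coeFn_inf_zero v]
    with x h1 h2 h3
  rw [h1, h2, Pi.smul_apply, smul_eq_mul, h3]
  rcases le_total (v x) 0 with ha | ha <;> simp [ha, mul_left_comm]

end Lattice

section Pairing

variable {p : ℝ}

local notation "L'" => Lp ℝ (ENNReal.ofReal (p / (p - 1))) μ
local notation "L" => Lp ℝ (ENNReal.ofReal p) μ

theorem integrable_coeFn_mul_coeFn (hp : 1 < p) (u : L') (k : L) :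
    Integrable (fun x => u x * k x) μ :=
  haveI : (ENNReal.ofReal (p / (p - 1))).HolderConjugate (ENNReal.ofReal p) :=
    (Real.HolderConjugate.conjExponent hp).symm.ennrealOfReal
  (Lp.memLp u).integrable_mul (Lp.memLp k)

theorem integral_smul_mul (a : ℝ) (u : L') (k : L) :
    ∫ x, (a • u) x * k x ∂μ = a * ∫ x, u x * k x ∂μ := by
  rw [← integral_const_mul]
  refine integral_congr_ae ?_
  filter_upwards [coeFn_smul a u] with x hx
  rw [hx, Pi.smul_apply, smul_eq_mul, mul_assoc]

theorem integral_mul_smul_add_smul (hp : 1 < p) (a b : ℝ) (u : L') (k l : L) :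
    ∫ x, u x * (a • k + b • l) x ∂μ = a * ∫ x, u x * k x ∂μ + b * ∫ x, u x * l x ∂μ := by
  rw [← integral_const_mul, ← integral_const_mul,
    ← integral_add ((integrable_coeFn_mul_coeFn hp u k).const_mul a)
      ((integrable_coeFn_mul_coeFn hp u l).const_mul b)]
  refine integral_congr_ae ?_
  filter_upwards [coeFn_add (a • k) (b • l), coeFn_smul a k, coeFn_smul b l] with x h1 h2 h3
  rw [h1, Pi.add_apply, h2, h3, Pi.smul_apply, Pi.smul_apply, smul_eq_mul, smul_eq_mul]
  ring

variable [Fact (1 ≤ ENNReal.ofReal (p / (p - 1)))] [Fact (1 ≤ ENNReal.ofReal p)]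

theorem integral_sup_zero_mul_apply (hp : 1 < p) (T : L' →L[ℝ] L) {v : L'} {t s : ℝ}
    (ht : 0 ≤ t) (hs : 0 ≤ s) :
    ∫ x, ((t • (v ⊔ 0) + s • (v ⊓ 0)) ⊔ 0) x * T (t • (v ⊔ 0) + s • (v ⊓ 0)) x ∂μ =
      t * (t * ∫ x, (v ⊔ 0) x * T (v ⊔ 0) x ∂μ + s * ∫ x, (v ⊔ 0) x * T (v ⊓ 0) x ∂μ) := by
  rw [smul_sup_add_smul_inf_sup_zero ht hs, map_add, map_smul, map_smul,
    integral_mul_smul_add_smul hp, integral_smul_mul, integral_smul_mul]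
  ring

theorem integral_inf_zero_mul_apply (hp : 1 < p) (T : L' →L[ℝ] L)
    (hsym : ∀ u w : L', ∫ x, u x * T w x ∂μ = ∫ x, w x * T u x ∂μ) {v : L'} {t s : ℝ}
    (ht : 0 ≤ t) (hs : 0 ≤ s) :
    ∫ x, ((t • (v ⊔ 0) + s • (v ⊓ 0)) ⊓ 0) x * T (t • (v ⊔ 0) + s • (v ⊓ 0)) x ∂μ =
      s * (t * ∫ x, (v ⊔ 0) x * T (v ⊓ 0) x ∂μ + s * ∫ x, (v ⊓ 0) x * T (v ⊓ 0) x ∂μ) := by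
  rw [smul_sup_add_smul_inf_inf_zero ht hs, map_add, map_smul, map_smul,
    integral_mul_smul_add_smul hp, integral_smul_mul, integral_smul_mul, hsym (v ⊓ 0)]
  ring

theorem integral_mul_apply_inf_zero_neg (hp : 1 < p) (T : L' →L[ℝ] L)
    (hT : ∀ w : L', 0 ≤ w → w ≠ 0 → ∀ᵐ x ∂μ, 0 < T w x) {u v : L'} (hu0 : 0 ≤ u) (hu : u ≠ 0)
    (hv : v ⊓ 0 ≠ 0) : ∫ x, u x * T (v ⊓ 0) x ∂μ < 0 := by
  have hpos := integral_mul_pos_of_ae_pos ((coeFn_nonneg u).2 hu0)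
    (fun h0 => hu (eq_zero_iff_ae_eq_zero.2 h0))
    (hT _ (neg_nonneg.2 inf_le_right) (neg_ne_zero.2 hv)) (integrable_coeFn_mul_coeFn hp u _)
  have hneg : ∫ x, u x * T (-(v ⊓ 0)) x ∂μ = -∫ x, u x * T (v ⊓ 0) x ∂μ := by
    rw [← integral_neg, map_neg]
    refine integral_congr_ae ?_
    filter_upwards [coeFn_neg (T (v ⊓ 0))] with x hx
    rw [hx, Pi.neg_apply, mul_neg]
  exact neg_pos.1 (hneg ▸ hpos)

end Pairing

end MeasureTheory.Lp

section Nehari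

variable {X : Type*} [MeasurableSpace X] {μ : Measure X} {p : ℝ}
  [Fact (1 ≤ ENNReal.ofReal (p / (p - 1)))] [Fact (1 ≤ ENNReal.ofReal p)]

local notation "L'" => Lp ℝ (ENNReal.ofReal (p / (p - 1))) μ
local notation "L" => Lp ℝ (ENNReal.ofReal p) μ

def nodalNehariSet (h : ℝ → ℝ) (T : L' →L[ℝ] L) : Set L' :=
  {w | w ⊔ 0 ≠ 0 ∧ w ⊓ 0 ≠ 0 ∧
    (∫ x, h (w x) * (w ⊔ 0) x ∂μ = ∫ x, (w ⊔ 0) x * T w x ∂μ) ∧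
    (∫ x, h (w x) * (w ⊓ 0) x ∂μ = ∫ x, (w ⊓ 0) x * T w x ∂μ)}

theorem exists_smul_sup_add_smul_inf_mem_nodalNehariSet [IsFiniteMeasure μ] (hp : 1 < p)
    {h : ℝ → ℝ} (hh : Continuous h) (hh_mono : Monotone h) (hh0 : h 0 = 0) {C₁ C₂ : ℝ}
    (hC₂ : 0 ≤ C₂) (hgrowth : ∀ σ, |h σ| ≤ C₁ + C₂ * |σ| ^ (p - 1)⁻¹)
    (hratio : AntitoneOn (fun σ => h σ / σ) (Ioi 0))
    (htend : Tendsto (fun σ => h σ / σ) (𝓝[>] 0) atTop)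
    (T : L' →L[ℝ] L) (hsym : ∀ u w : L', ∫ x, u x * T w x ∂μ = ∫ x, w x * T u x ∂μ)
    (hT : ∀ w : L', 0 ≤ w → w ≠ 0 → ∀ᵐ x ∂μ, 0 < T w x)
    {v : L'} (hvp : v ⊔ 0 ≠ 0) (hvm : v ⊓ 0 ≠ 0)
    (hv₁ : ∫ x, h (v x) * (v ⊔ 0) x ∂μ ≤ ∫ x, (v ⊔ 0) x * T v x ∂μ)
    (hv₂ : ∫ x, h (v x) * (v ⊓ 0) x ∂μ ≤ ∫ x, (v ⊓ 0) x * T v x ∂μ) :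
    ∃ t ∈ Ioc (0 : ℝ) 1, ∃ s ∈ Ioc (0 : ℝ) 1, t • (v ⊔ 0) + s • (v ⊓ 0) ∈ nodalNehariSet h T := by
  have hr : 0 ≤ (p - 1)⁻¹ := inv_nonneg.2 (by linarith)
  have hmem (g : L') : MemLp g (ENNReal.ofReal ((p - 1)⁻¹ + 1)) μ := by
    convert Lp.memLp g using 3
    field_simp [(by linarith : p - 1 ≠ 0)]
    ring
  have hint (g : L') := integrable_comp_mul_mul hh hC₂ hr hgrowth (hmem g)
  have hcont (g : L') := continuous_integral_comp_mul_mul hh hC₂ hr hgrowth (hmem g)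
  have hu0 : 0 ≤ᵐ[μ] ⇑(v ⊔ 0) := (Lp.coeFn_nonneg _).2 le_sup_right
  obtain ⟨t₁, ⟨hαt₁, ht₁⟩⟩ := ((tendsto_integral_comp_mul_mul_div_atTop hh_mono hh0 htend
    (Lp.aestronglyMeasurable _).aemeasurable hu0
    (fun h0 => hvp (Lp.eq_zero_iff_ae_eq_zero.2 h0)) (hint _)).eventually
    (eventually_gt_atTop (∫ x, (v ⊔ 0) x * T (v ⊔ 0) x ∂μ))).and
    (Ioo_mem_nhdsGT (zero_lt_one' ℝ)) |>.exists
  have e₁ := Lp.integral_comp_mul_sup_zero (v := v) h zero_le_one zero_le_one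
  have e₂ := Lp.integral_sup_zero_mul_apply hp T (v := v) zero_le_one zero_le_one
  have e₃ := Lp.integral_comp_mul_inf_zero (v := v) h zero_le_one zero_le_one
  have e₄ := Lp.integral_inf_zero_mul_apply hp T hsym (v := v) zero_le_one zero_le_one
  rw [Lp.one_smul_sup_add_one_smul_inf] at e₁ e₂ e₃ e₄
  obtain ⟨t, ht, s, hs, hA, hB⟩ := exists_mem_Ioc_eq_of_continuousOn
    (γ := ∫ x, (v ⊓ 0) x * T (v ⊓ 0) x ∂μ)
    (Lp.integral_mul_apply_inf_zero_neg hp T hT le_sup_right hvp hvm) ht₁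
    (hcont (v ⊔ 0)).continuousOn (hcont (v ⊓ 0)).continuousOn
    (antitoneOn_integral_comp_mul_mul_div hratio hu0 (hint _)) (by simp [hh0]) hαt₁
    (by linarith) (by linarith)
  refine ⟨t, ht, s, hs, ?_, ?_, ?_, ?_⟩
  · rw [Lp.smul_sup_add_smul_inf_sup_zero ht.1.le hs.1.le]
    exact smul_ne_zero ht.1.ne' hvp
  · rw [Lp.smul_sup_add_smul_inf_inf_zero ht.1.le hs.1.le]
    exact smul_ne_zero hs.1.ne' hvm
  · rw [Lp.integral_comp_mul_sup_zero h ht.1.le hs.1.le,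
      Lp.integral_sup_zero_mul_apply hp T ht.1.le hs.1.le, hA]
  · rw [Lp.integral_comp_mul_inf_zero h ht.1.le hs.1.le,
      Lp.integral_inf_zero_mul_apply hp T hsym ht.1.le hs.1.le, hB]
    ring

end Nehari

theorem stmt_17_general (N : ℕ) (Ω : Set (Fin N → ℝ))
    (hΩfin : volume Ω < ⊤)
    (f h : ℝ → ℝ) (c₀ p b₀ q : ℝ)
    (hf1 : ContDiff ℝ 1 f) (hf01 : f 0 = 0)
    (hf2 : ∀ t : ℝ, f (-t) = - f t)
    (hc₀ : 0 < c₀) (hp : 2 < p)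
    (hf3 : Filter.Tendsto (fun t : ℝ => f t / t ^ (p - 1)) Filter.atTop (nhds c₀))
    (hb₀ : 0 < b₀) (hq2 : 2 < q)
    (hf4 : Filter.Tendsto (fun t : ℝ => f t / t ^ (q - 1))
      (nhdsWithin 0 (Set.Ioi 0)) (nhds b₀))
    (hf5 : StrictMonoOn (fun t : ℝ => f t / t) (Set.Ioi 0))
    (hhf : Function.LeftInverse h f) (hfh : Function.RightInverse h f)
    [Fact (1 ≤ ENNReal.ofReal (p / (p - 1)))] [Fact (1 ≤ ENNReal.ofReal p)]
    (T : Lp ℝ (ENNReal.ofReal (p / (p - 1))) (volume.restrict Ω) →L[ℝ] Lp ℝ (ENNReal.ofReal p) (volume.restrict Ω))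
    (hsym : ∀ u v : Lp ℝ (ENNReal.ofReal (p / (p - 1))) (volume.restrict Ω),
      ∫ x, u x * T v x ∂(volume.restrict Ω) = ∫ x, v x * T u x ∂(volume.restrict Ω))
    (hTimp : ∀ v : Lp ℝ (ENNReal.ofReal (p / (p - 1))) (volume.restrict Ω), 0 ≤ v → v ≠ 0 → ∀ᵐ x ∂(volume.restrict Ω), 0 < T v x)
    (v : Lp ℝ (ENNReal.ofReal (p / (p - 1))) (volume.restrict Ω)) (hvp : v ⊔ 0 ≠ 0) (hvm : v ⊓ 0 ≠ 0)
    (hineq1 : (∫ x, h (v x) * (v ⊔ 0) x ∂(volume.restrict Ω)) - ∫ x, (v ⊔ 0) x * T v x ∂(volume.restrict Ω) ≤ 0)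
    (hineq2 : (∫ x, h (v x) * (v ⊓ 0) x ∂(volume.restrict Ω)) - ∫ x, (v ⊓ 0) x * T v x ∂(volume.restrict Ω) ≤ 0) :
    ∃ t s : ℝ, t ∈ Set.Ioc (0:ℝ) 1 ∧ s ∈ Set.Ioc (0:ℝ) 1 ∧
      t • (v ⊔ 0) + s • (v ⊓ 0) ∈
        {w : Lp ℝ (ENNReal.ofReal (p / (p - 1))) (volume.restrict Ω) | w ⊔ 0 ≠ 0 ∧ w ⊓ 0 ≠ 0 ∧
          (∫ x, h (w x) * (w ⊔ 0) x ∂(volume.restrict Ω) = ∫ x, (w ⊔ 0) x * T w x ∂(volume.restrict Ω)) ∧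
          (∫ x, h (w x) * (w ⊓ 0) x ∂(volume.restrict Ω) = ∫ x, (w ⊓ 0) x * T w x ∂(volume.restrict Ω))} := by
  have : IsFiniteMeasure (volume.restrict Ω) := isFiniteMeasure_restrict.2 hΩfin.ne
  have hf_small := tendsto_div_self_nhdsGT_zero_of_tendsto_div_rpow hb₀ hq2 hf4
  obtain ⟨t₀, (hft₀ : 0 < f t₀ / t₀), (ht₀ : 0 < t₀)⟩ :=
    ((tendsto_nhdsWithin_iff.1 hf_small).2.and self_mem_nhdsWithin).exists
  have hf_mono : StrictMono f := hf1.continuous.strictMono_of_inj_of_lt hhf.injective ht₀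
    (by rw [hf01]; exact (div_pos_iff_of_pos_right ht₀).1 hft₀)
  have hh_mono : StrictMono h := fun a b hab => hf_mono.lt_iff_lt.1 (by rwa [hfh a, hfh b])
  have hh_cont : Continuous h := hh_mono.monotone.continuous_of_surjective hhf.surjective
  have hh0 : h 0 = 0 := by simpa [hf01] using hhf 0
  have hh_odd (σ : ℝ) : h (-σ) = -h σ := by conv_lhs => rw [← hfh σ, ← hf2, hhf]
  obtain ⟨C₁, C₂, hC₂, hgrowth⟩ :=
    exists_abs_le_add_mul_abs_rpow hc₀ (by linarith) hf3 hh_mono.monotone hh0 hh_odd hfh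
  obtain ⟨t, ht, s, hs, hmem⟩ := exists_smul_sup_add_smul_inf_mem_nodalNehariSet (by linarith)
    hh_cont hh_mono.monotone hh0 hC₂ hgrowth
    (antitoneOn_div_self_of_rightInverse hf5.monotoneOn hh_mono hh0 hfh)
    (tendsto_div_self_atTop_of_rightInverse hf_small hh_mono hh_cont hh0 hfh)
    T hsym hTimp hvp hvm (by linarith) (by linarith)
  exact ⟨t, s, ht, hs, hmem⟩

theorem stmt_17 (N : ℕ) (Ω : Set (Fin N → ℝ)) (hΩmeas : MeasurableSet Ω)
    (hΩpos : 0 < volume Ω) (hΩfin : volume Ω < ⊤)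
    (f h : ℝ → ℝ) (c₀ p b₀ q : ℝ)
    (hf1 : ContDiff ℝ 1 f) (hf01 : f 0 = 0) (hf02 : deriv f 0 = 0)
    (hf2 : ∀ t : ℝ, f (-t) = - f t)
    (hc₀ : 0 < c₀) (hp : 2 < p)
    (hf3 : Filter.Tendsto (fun t : ℝ => f t / t ^ (p - 1)) Filter.atTop (nhds c₀))
    (hb₀ : 0 < b₀) (hq2 : 2 < q) (hqp : q ≤ p)
    (hf4 : Filter.Tendsto (fun t : ℝ => f t / t ^ (q - 1))
      (nhdsWithin 0 (Set.Ioi 0)) (nhds b₀))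
    (hf5 : StrictMonoOn (fun t : ℝ => f t / t) (Set.Ioi 0))
    (hhf : Function.LeftInverse h f) (hfh : Function.RightInverse h f)
    [Fact (1 ≤ ENNReal.ofReal (p / (p - 1)))] [Fact (1 ≤ ENNReal.ofReal p)]
    (T : Lp ℝ (ENNReal.ofReal (p / (p - 1))) (volume.restrict Ω) →L[ℝ] Lp ℝ (ENNReal.ofReal p) (volume.restrict Ω))
    (hsym : ∀ u v : Lp ℝ (ENNReal.ofReal (p / (p - 1))) (volume.restrict Ω),
      ∫ x, u x * T v x ∂(volume.restrict Ω) = ∫ x, v x * T u x ∂(volume.restrict Ω))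
    (hTpos : ∀ v : Lp ℝ (ENNReal.ofReal (p / (p - 1))) (volume.restrict Ω), v ≠ 0 → 0 < ∫ x, v x * T v x ∂(volume.restrict Ω))
    (hTimp : ∀ v : Lp ℝ (ENNReal.ofReal (p / (p - 1))) (volume.restrict Ω), 0 ≤ v → v ≠ 0 → ∀ᵐ x ∂(volume.restrict Ω), 0 < T v x)
    (v : Lp ℝ (ENNReal.ofReal (p / (p - 1))) (volume.restrict Ω)) (hvp : v ⊔ 0 ≠ 0) (hvm : v ⊓ 0 ≠ 0)
    (hineq1 : (∫ x, h (v x) * (v ⊔ 0) x ∂(volume.restrict Ω)) - ∫ x, (v ⊔ 0) x * T v x ∂(volume.restrict Ω) ≤ 0)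
    (hineq2 : (∫ x, h (v x) * (v ⊓ 0) x ∂(volume.restrict Ω)) - ∫ x, (v ⊓ 0) x * T v x ∂(volume.restrict Ω) ≤ 0) :
    ∃ t s : ℝ, t ∈ Set.Ioc (0:ℝ) 1 ∧ s ∈ Set.Ioc (0:ℝ) 1 ∧
      t • (v ⊔ 0) + s • (v ⊓ 0) ∈
        {w : Lp ℝ (ENNReal.ofReal (p / (p - 1))) (volume.restrict Ω) | w ⊔ 0 ≠ 0 ∧ w ⊓ 0 ≠ 0 ∧
          (∫ x, h (w x) * (w ⊔ 0) x ∂(volume.restrict Ω) = ∫ x, (w ⊔ 0) x * T w x ∂(volume.restrict Ω)) ∧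
          (∫ x, h (w x) * (w ⊓ 0) x ∂(volume.restrict Ω) = ∫ x, (w ⊓ 0) x * T w x ∂(volume.restrict Ω))} :=
  stmt_17_general N Ω hΩfin f h c₀ p b₀ q hf1 hf01 hf2 hc₀ hp hf3 hb₀ hq2 hf4 hf5 hhf hfh T hsym
    hTimp v hvp hvm hineq1 hineq2
end
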